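/- arXiv:1210.8379 — 9 statements merged into one kernel-verified Lean document; each statement's English description precedes it below -/
import Mathlib

section
/- In the root system of type A_ℓ with simple roots α₁,…,α_ℓ, for every element γ = Σ aᵢ αᵢ of the positive root lattice (all aᵢ ∈ ℕ), the positive length |γ|₊ equals h(γ) := Σ_{i=1}^{ℓ} max(aᵢ − a_{i−1}, 0), where a₀ = 0. -/
/-- The length of `γ` with respect to a set `S`: the minimal number of elements
of `S` (with repetition) summing to `γ`. -/
noncomputable def minLen {V : Type*} [AddCommMonoid V] (S : Set V) (γ : V) : ℕ :=
  sInf {r : ℕ | ∃ m : Multiset V, (∀ x ∈ m, x ∈ S) ∧ m.sum = γ ∧ Multiset.card m = r}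

/-- The positive roots of type `A_ℓ`, written in simple-root coordinates:
`α_{h,k} = α_h + α_{h+1} + ⋯ + α_k` has coordinate vector the indicator
function of the interval `[h, k]`. -/
def posRootA (ℓ : ℕ) : Set (Fin ℓ → ℤ) :=
  {v | ∃ h k : Fin ℓ, h ≤ k ∧ v = fun i => if h ≤ i ∧ i ≤ k then 1 else 0}

namespace PosLenA

/-- Extension of a vector indexed by `Fin ℓ` to `ℕ`, read with a shift so that
`ext v n = v (n-1)` for `1 ≤ n ≤ ℓ` and `0` otherwise. -/
def ext (ℓ : ℕ) (v : Fin ℓ → ℤ) (n : ℕ) : ℤ :=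
  if hn : 1 ≤ n ∧ n ≤ ℓ then v ⟨n - 1, by omega⟩ else 0

/-- The horizontal statistic over ℤ. -/
def Hz (ℓ : ℕ) (v : Fin ℓ → ℤ) : ℕ :=
  ∑ i ∈ Finset.range ℓ, (ext ℓ v (i + 1) - ext ℓ v i).toNat

lemma ext_add {ℓ : ℕ} (u v : Fin ℓ → ℤ) (n : ℕ) :
    ext ℓ (u + v) n = ext ℓ u n + ext ℓ v n := by
  unfold ext; split_ifs <;> simp

lemma Hz_add_le {ℓ : ℕ} (u v : Fin ℓ → ℤ) : Hz ℓ (u + v) ≤ Hz ℓ u + Hz ℓ v := by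
  unfold Hz
  rw [← Finset.sum_add_distrib]
  refine Finset.sum_le_sum fun i _ => ?_
  rw [ext_add, ext_add]
  omega

lemma ext_root {ℓ : ℕ} (h k : Fin ℓ) (n : ℕ) :
    ext ℓ (fun i => if h ≤ i ∧ i ≤ k then 1 else 0) n
      = if (h : ℕ) + 1 ≤ n ∧ n ≤ (k : ℕ) + 1 then 1 else 0 := by
  have hkl := k.isLt
  unfold ext
  split_ifs with h1 h2 h2
  · simp only [Fin.le_def] at h2 ⊢
    rw [if_pos]
    exact ⟨by omega, by omega⟩
  · simp only [Fin.le_def] at h2 ⊢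
    rw [if_neg]
    omega
  · omega
  · rfl

lemma Hz_root {ℓ : ℕ} {x : Fin ℓ → ℤ} (hx : x ∈ posRootA ℓ) : Hz ℓ x = 1 := by
  obtain ⟨h, k, hk, rfl⟩ := hx
  have hkl := k.isLt
  have hhk : (h : ℕ) ≤ (k : ℕ) := hk
  unfold Hz
  have hterm : ∀ i ∈ Finset.range ℓ,
      (ext ℓ (fun i => if h ≤ i ∧ i ≤ k then (1 : ℤ) else 0) (i + 1)
        - ext ℓ (fun i => if h ≤ i ∧ i ≤ k then (1 : ℤ) else 0) i).toNat
      = if i = (h : ℕ) then 1 else 0 := by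
    intro i hi
    rw [ext_root, ext_root]
    split_ifs <;> omega
  rw [Finset.sum_congr rfl hterm, Finset.sum_ite_eq' (Finset.range ℓ) (h : ℕ) (fun _ => 1),
    if_pos (Finset.mem_range.mpr h.isLt)]

lemma Hz_sum_le {ℓ : ℕ} (m : Multiset (Fin ℓ → ℤ)) :
    (∀ x ∈ m, x ∈ posRootA ℓ) → Hz ℓ m.sum ≤ Multiset.card m := by
  induction m using Multiset.induction with
  | empty => intro _; simp [Hz, ext]
  | cons x s ih =>
    intro hm
    rw [Multiset.sum_cons, Multiset.card_cons]
    calc Hz ℓ (x + s.sum) ≤ Hz ℓ x + Hz ℓ s.sum := Hz_add_le _ _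
      _ ≤ 1 + Multiset.card s := by
          rw [Hz_root (hm x (Multiset.mem_cons_self _ _))]
          exact Nat.add_le_add_left (ih fun y hy => hm y (Multiset.mem_cons_of_mem hy)) 1
      _ = Multiset.card s + 1 := by omega

lemma Hz_gamma {ℓ : ℕ} (a : ℕ → ℕ) (ha0 : a 0 = 0) :
    Hz ℓ (fun i : Fin ℓ => (a ((i : ℕ) + 1) : ℤ)) = ∑ i ∈ Finset.range ℓ, (a (i + 1) - a i) := by
  have hext : ∀ n ≤ ℓ, ext ℓ (fun i : Fin ℓ => (a ((i : ℕ) + 1) : ℤ)) n = (a n : ℤ) := by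
    intro n hn
    unfold ext
    split_ifs with h1
    · have : n - 1 + 1 = n := by omega
      simp [this]
    · have : n = 0 := by omega
      simp [this, ha0]
  unfold Hz
  refine Finset.sum_congr rfl fun i hi => ?_
  have hi' := Finset.mem_range.mp hi
  rw [hext (i + 1) (by omega), hext i (by omega)]
  omega

/-- Trivial decomposition when all coordinates vanish. -/
lemma zero_case (ℓ : ℕ) (a : ℕ → ℕ) (ha0 : a 0 = 0) (hz : ∀ i < ℓ, a (i + 1) = 0) :
    ∃ m : Multiset (Fin ℓ → ℤ), (∀ x ∈ m, x ∈ posRootA ℓ) ∧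
      m.sum = (fun i : Fin ℓ => (a ((i : ℕ) + 1) : ℤ)) ∧
      Multiset.card m = ∑ i ∈ Finset.range ℓ, (a (i + 1) - a i) := by
  refine ⟨0, by simp, ?_, ?_⟩
  · rw [Multiset.sum_zero]
    funext i
    have := hz i i.isLt
    simp [this]
  · rw [Multiset.card_zero]
    symm
    refine Finset.sum_eq_zero fun i hi => ?_
    have := hz i (Finset.mem_range.mp hi)
    omega

lemma exists_decomp (ℓ : ℕ) : ∀ N (a : ℕ → ℕ), a 0 = 0 →
    (∑ i ∈ Finset.range ℓ, a (i + 1)) ≤ N →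
    ∃ m : Multiset (Fin ℓ → ℤ), (∀ x ∈ m, x ∈ posRootA ℓ) ∧
      m.sum = (fun i : Fin ℓ => (a ((i : ℕ) + 1) : ℤ)) ∧
      Multiset.card m = ∑ i ∈ Finset.range ℓ, (a (i + 1) - a i) := by
  intro N
  induction N with
  | zero =>
    intro a ha0 hle
    refine zero_case ℓ a ha0 fun i hi => ?_
    have h0 : ∑ i ∈ Finset.range ℓ, a (i + 1) = 0 := Nat.le_zero.mp hle
    exact (Finset.sum_eq_zero_iff.mp h0) i (Finset.mem_range.mpr hi)
  | succ N ih =>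
    intro a ha0 hle
    classical
    by_cases hex : ∃ i, i < ℓ ∧ a (i + 1) ≠ 0
    swap
    · push_neg at hex
      exact zero_case ℓ a ha0 hex
    -- first nonzero coordinate
    obtain ⟨h, hhl, hha, hmin⟩ : ∃ h, h < ℓ ∧ a (h + 1) ≠ 0 ∧ ∀ j < h, a (j + 1) = 0 := by
      refine ⟨Nat.find hex, (Nat.find_spec hex).1, (Nat.find_spec hex).2, fun j hj => ?_⟩
      by_contra hc
      exact Nat.find_min hex hj ⟨lt_trans hj (Nat.find_spec hex).1, hc⟩
    -- end of the run of nonzero coordinates starting at h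
    obtain ⟨k, hkl, hhk, hrun, hbdry⟩ : ∃ k, k < ℓ ∧ h ≤ k ∧
        (∀ j, h ≤ j → j ≤ k → 1 ≤ a (j + 1)) ∧ (k + 1 < ℓ → a (k + 2) = 0) := by
      set P : ℕ → Prop := fun k => k < ℓ ∧ ∀ j, h ≤ j → j ≤ k → a (j + 1) ≠ 0 with hP
      have hPh : P h := ⟨hhl, fun j hj1 hj2 => by
        have : j = h := le_antisymm hj2 hj1
        rw [this]; exact hha⟩
      have hk : P (Nat.findGreatest P (ℓ - 1)) :=
        Nat.findGreatest_spec (m := h) (by omega) hPh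
      refine ⟨Nat.findGreatest P (ℓ - 1), hk.1, Nat.le_findGreatest (by omega) hPh,
        fun j h1 h2 => Nat.one_le_iff_ne_zero.mpr (hk.2 j h1 h2), ?_⟩
      intro hkk
      by_contra hc
      have hPk1 : P (Nat.findGreatest P (ℓ - 1) + 1) := by
        refine ⟨hkk, fun j h1 h2 => ?_⟩
        rcases Nat.lt_or_ge j (Nat.findGreatest P (ℓ - 1) + 1) with hj | hj
        · exact hk.2 j h1 (by omega)
        · have : j = Nat.findGreatest P (ℓ - 1) + 1 := by omega
          rw [this]; exact hc
      exact Nat.findGreatest_is_greatest (Nat.lt_succ_self _) (by omega) hPk1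
    have hah : a h = 0 := by
      by_cases h0 : h = 0
      · rw [h0, ha0]
      · have := hmin (h - 1) (by omega)
        rwa [Nat.sub_add_cancel (by omega)] at this
    -- subtract the root α_{h..k}
    set a' : ℕ → ℕ := fun n => if h + 1 ≤ n ∧ n ≤ k + 1 then a n - 1 else a n with ha'
    have ha'0 : a' 0 = 0 := by simp [ha', ha0]
    have hterm : ∀ i < ℓ,
        a (i + 1) - a i = (a' (i + 1) - a' i) + (if i = h then 1 else 0) := by
      intro i hi
      simp only [ha']
      rcases lt_trichotomy i h with c | c | c
      · have h1 := hmin i c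
        split_ifs <;> omega
      · subst c
        have h1 := hrun i le_rfl hhk
        split_ifs <;> omega
      · by_cases c2 : i ≤ k
        · have h1 := hrun i (by omega) c2
          have h2 := hrun (i - 1) (by omega) (by omega)
          have h3 : i - 1 + 1 = i := by omega
          rw [h3] at h2
          split_ifs <;> omega
        · by_cases c3 : i = k + 1
          · have h1 := hbdry (by omega)
            have h4 : k + 2 = i + 1 := by omega
            rw [h4] at h1
            have h2 := hrun k hhk le_rfl
            split_ifs <;> omega
          · split_ifs <;> omega
    have hlt : ∑ i ∈ Finset.range ℓ, a' (i + 1) < ∑ i ∈ Finset.range ℓ, a (i + 1) := by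
      refine Finset.sum_lt_sum (fun i _ => ?_) ⟨h, Finset.mem_range.mpr hhl, ?_⟩
      · simp only [ha']; split_ifs <;> omega
      · have h1 := hrun h le_rfl hhk
        simp only [ha']
        rw [if_pos ⟨le_rfl, by omega⟩]
        omega
    obtain ⟨m, hm1, hm2, hm3⟩ := ih a' ha'0 (by omega)
    refine ⟨(fun i : Fin ℓ => if (⟨h, hhl⟩ : Fin ℓ) ≤ i ∧ i ≤ (⟨k, hkl⟩ : Fin ℓ) then 1 else 0)
        ::ₘ m, ?_, ?_, ?_⟩
    · intro x hx
      rcases Multiset.mem_cons.mp hx with rfl | hx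
      · exact ⟨⟨h, hhl⟩, ⟨k, hkl⟩, hhk, rfl⟩
      · exact hm1 x hx
    · rw [Multiset.sum_cons, hm2]
      funext i
      simp only [Pi.add_apply, Fin.mk_le_mk, Fin.le_def, ha']
      have h1 := hrun i
      split_ifs <;> push_cast <;> omega
    · rw [Multiset.card_cons, hm3]
      have : ∑ i ∈ Finset.range ℓ, (a (i + 1) - a i)
          = ∑ i ∈ Finset.range ℓ, ((a' (i + 1) - a' i) + (if i = h then 1 else 0)) :=
        Finset.sum_congr rfl fun i hi => hterm i (Finset.mem_range.mp hi)
      rw [this, Finset.sum_add_distrib,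
        Finset.sum_ite_eq' (Finset.range ℓ) h (fun _ => 1),
        if_pos (Finset.mem_range.mpr hhl)]

end PosLenA

/-- In type `A_ℓ`, for `γ = Σ aᵢ αᵢ` with all `aᵢ ∈ ℕ` (an arbitrary element of
the ℕ-span of the positive roots), the positive length of `γ` equals
`h(γ) = Σ_{i=1}^{ℓ} max (aᵢ - a_{i-1}) 0` (with `a₀ = 0`; here `max (x - y) 0`
is the truncated subtraction on ℕ). -/
theorem posLength_eq_horizontal_A (ℓ : ℕ) (a : ℕ → ℕ) (ha0 : a 0 = 0) :
    minLen (posRootA ℓ) (fun i : Fin ℓ => (a ((i : ℕ) + 1) : ℤ)) =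
      ∑ i ∈ Finset.range ℓ, (a (i + 1) - a i) := by
  obtain ⟨m, hm1, hm2, hm3⟩ := PosLenA.exists_decomp ℓ _ a ha0 le_rfl
  unfold minLen
  apply le_antisymm
  · exact Nat.sInf_le ⟨m, hm1, hm2, hm3⟩
  · refine le_csInf ⟨_, m, hm1, hm2, hm3⟩ ?_
    rintro r ⟨m', h1, h2, h3⟩
    calc ∑ i ∈ Finset.range ℓ, (a (i + 1) - a i)
        = PosLenA.Hz ℓ (fun i : Fin ℓ => (a ((i : ℕ) + 1) : ℤ)) := (PosLenA.Hz_gamma a ha0).symm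
      _ = PosLenA.Hz ℓ m'.sum := by rw [h2]
      _ ≤ Multiset.card m' := PosLenA.Hz_sum_le m' h1
      _ = r := h3
end

section
/- In type A_ℓ, for every element γ of the positive root lattice, the length |γ| (minimum number of roots, positive or negative, summing to γ) equals the positive length |γ|₊ (minimum number of positive roots summing to γ). -/
/-- The roots of type `A_ℓ`, realized as `eᵢ - eⱼ` (`i ≠ j`) in `ℤ^{ℓ+1}`. -/
def rootsA (ℓ : ℕ) : Set (Fin (ℓ + 1) → ℤ) :=
  {v | ∃ i j : Fin (ℓ + 1), i ≠ j ∧ v = Pi.single i 1 - Pi.single j 1}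

/-- The positive roots of type `A_ℓ`: `eᵢ - eⱼ` for `i < j`. -/
def posRootsA (ℓ : ℕ) : Set (Fin (ℓ + 1) → ℤ) :=
  {v | ∃ i j : Fin (ℓ + 1), i < j ∧ v = Pi.single i 1 - Pi.single j 1}

/-!
Let `N⁺(γ) = ∑ᵢ max(γᵢ, 0)`. Adding a root `eᵢ - eⱼ` raises `N⁺` by at most one, so any
expression of `γ` as a sum of roots has at least `N⁺(γ)` terms. Conversely, `γ` lies in the
positive root cone iff its coordinates sum to `0` and all its prefix sums are nonnegative. For
such `γ ≠ 0`, let `j` be the first coordinate with `γⱼ < 0`; the prefix sum up to `j` forces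
some `i < j` with `γᵢ > 0`, and `γ - (eᵢ - eⱼ)` stays in the cone with `N⁺` smaller by one.
Hence `γ` is a sum of exactly `N⁺(γ)` positive roots, and both lengths equal `N⁺(γ)`.
-/

open Finset

theorem minLen_eq_of_isLeast {V : Type*} [AddCommMonoid V] {S : Set V} {γ : V} {n : ℕ}
    (hex : ∃ m : Multiset V, (∀ x ∈ m, x ∈ S) ∧ m.sum = γ ∧ Multiset.card m = n)
    (hle : ∀ m : Multiset V, (∀ x ∈ m, x ∈ S) → m.sum = γ → n ≤ Multiset.card m) :
    minLen S γ = n :=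
  IsLeast.csInf_eq ⟨hex, by rintro _ ⟨m, hm, hsum, rfl⟩; exact hle m hm hsum⟩

namespace TypeA

variable {ι : Type*}

def root [DecidableEq ι] (i j : ι) : ι → ℤ := Pi.single i 1 - Pi.single j 1

def roots (ι : Type*) [DecidableEq ι] : Set (ι → ℤ) := {v | ∃ i j : ι, i ≠ j ∧ v = root i j}

def posRoots (ι : Type*) [LinearOrder ι] : Set (ι → ℤ) := {v | ∃ i j : ι, i < j ∧ v = root i j}

theorem _root_.rootsA_eq_roots (ℓ : ℕ) : rootsA ℓ = roots (Fin (ℓ + 1)) := rfl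

theorem _root_.posRootsA_eq_posRoots (ℓ : ℕ) : posRootsA ℓ = posRoots (Fin (ℓ + 1)) := rfl

theorem posRoots_subset_roots [LinearOrder ι] : posRoots ι ⊆ roots ι := by
  rintro _ ⟨i, j, hij, rfl⟩
  exact ⟨i, j, hij.ne, rfl⟩

theorem root_apply [DecidableEq ι] (i j k : ι) :
    root i j k = (if k = i then 1 else 0) - (if k = j then 1 else 0) := by
  simp [root, Pi.single_apply]

def posPartSum [Fintype ι] (γ : ι → ℤ) : ℕ := ∑ i, (γ i).toNat

section posPartSum

variable [Fintype ι]

theorem posPartSum_add_le (γ δ : ι → ℤ) : posPartSum (γ + δ) ≤ posPartSum γ + posPartSum δ := by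
  rw [posPartSum, posPartSum, posPartSum, ← sum_add_distrib]
  exact sum_le_sum fun i _ => by simp only [Pi.add_apply]; omega

theorem posPartSum_pos {γ : ι → ℤ} (hsum : ∑ i, γ i = 0) (hne : γ ≠ 0) : 0 < posPartSum γ := by
  obtain ⟨i, -, hi⟩ := exists_pos_of_sum_zero_of_exists_nonzero (s := univ) γ hsum
    (by simpa [funext_iff] using hne)
  exact sum_pos' (fun _ _ => Nat.zero_le _) ⟨i, mem_univ i, by omega⟩

variable [DecidableEq ι]

theorem posPartSum_root {i j : ι} (hij : i ≠ j) : posPartSum (root i j) = 1 := by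
  have hcoord : ∀ k, (root i j k).toNat = if k = i then 1 else 0 := by
    intro k
    rw [root_apply]
    split_ifs <;> simp_all
  simp [posPartSum, hcoord]

theorem posPartSum_sum_le_card (m : Multiset (ι → ℤ)) (hm : ∀ x ∈ m, x ∈ roots ι) :
    posPartSum m.sum ≤ Multiset.card m := by
  calc posPartSum m.sum ≤ (m.map posPartSum).sum :=
        Multiset.le_sum_of_subadditive _ (by simp [posPartSum]) posPartSum_add_le m
    _ = Multiset.card m := by
        rw [Multiset.map_congr rfl fun x hx => ?_, Multiset.map_const', Multiset.sum_replicate,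
          smul_eq_mul, mul_one]
        obtain ⟨i, j, hij, rfl⟩ := hm x hx
        exact posPartSum_root hij

theorem posPartSum_sub_root {γ : ι → ℤ} {i j : ι} (hi : 0 < γ i) (hj : γ j < 0) :
    posPartSum γ = posPartSum (γ - root i j) + 1 := by
  have hcoord : ∀ k, (γ k).toNat = ((γ - root i j) k).toNat + if k = i then 1 else 0 := by
    intro k
    rw [Pi.sub_apply, root_apply]
    split_ifs <;> simp_all <;> omega
  simp [posPartSum, hcoord, sum_add_distrib]

end posPartSum

section prefixCone

variable [Fintype ι] [LinearOrder ι]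

/-- The `ℕ`-span of the positive roots, described by inequalities. -/
def prefixCone (ι : Type*) [Fintype ι] [LinearOrder ι] : AddSubmonoid (ι → ℤ) where
  carrier := {γ | ∑ i, γ i = 0 ∧ ∀ k, 0 ≤ ∑ i with i ≤ k, γ i}
  zero_mem' := by simp
  add_mem' := by
    rintro γ δ ⟨hγ, hγk⟩ ⟨hδ, hδk⟩
    refine ⟨by simp [sum_add_distrib, hγ, hδ], fun k => ?_⟩
    simpa [sum_add_distrib] using add_nonneg (hγk k) (hδk k)

theorem sum_root (i j : ι) : ∑ k, root i j k = 0 := by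
  simp [root_apply, sum_sub_distrib]

theorem sum_filter_le_root (i j k : ι) :
    ∑ m with m ≤ k, root i j m = (if i ≤ k then 1 else 0) - (if j ≤ k then 1 else 0) := by
  simp [root_apply, sum_sub_distrib, sum_ite_eq']

theorem root_mem_prefixCone {i j : ι} (hij : i ≤ j) : root i j ∈ prefixCone ι := by
  refine ⟨sum_root i j, fun k => ?_⟩
  rw [sum_filter_le_root]
  have : j ≤ k → i ≤ k := hij.trans
  split_ifs <;> simp_all

theorem closure_posRoots_le_prefixCone : AddSubmonoid.closure (posRoots ι) ≤ prefixCone ι :=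
  AddSubmonoid.closure_le.mpr fun _ ⟨_, _, hij, hv⟩ => hv ▸ root_mem_prefixCone hij.le

/-- The only prefix sums that drop are those ending in `[i, j)`, and these contain `γ i ≥ 1`
among nonnegative terms. -/
theorem sub_root_mem_prefixCone {γ : ι → ℤ} (hγ : γ ∈ prefixCone ι) {i j : ι} (hij : i < j)
    (hi : 0 < γ i) (hbefore : ∀ m < j, 0 ≤ γ m) : γ - root i j ∈ prefixCone ι := by
  obtain ⟨hsum, hprefix⟩ := hγ
  refine ⟨by simp [sum_sub_distrib, hsum, sum_root], fun k => ?_⟩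
  simp only [Pi.sub_apply, sum_sub_distrib, sum_filter_le_root]
  rcases lt_or_ge k i with hki | hik
  · simpa [hki.not_ge, (hki.trans hij).not_ge] using hprefix k
  rcases lt_or_ge k j with hkj | hjk
  · have : γ i ≤ ∑ m with m ≤ k, γ m :=
      single_le_sum (fun m hm => hbefore m ((mem_filter.mp hm).2.trans_lt hkj))
        (mem_filter.mpr ⟨mem_univ i, hik⟩)
    simp only [hik, hkj.not_ge, if_true, if_false]
    omega
  · simpa [hik, hjk] using hprefix k

theorem exists_sub_root_mem_prefixCone {γ : ι → ℤ} (hγ : γ ∈ prefixCone ι) (hne : γ ≠ 0) :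
    ∃ i j, i < j ∧ 0 < γ i ∧ γ j < 0 ∧ γ - root i j ∈ prefixCone ι := by
  obtain ⟨hsum, hprefix⟩ := hγ
  obtain ⟨j₀, -, hj₀⟩ := exists_pos_of_sum_zero_of_exists_nonzero (s := univ) (-γ) (by simp [hsum])
    (by simpa [funext_iff] using hne)
  obtain ⟨j, hj, hjmin⟩ :=
    exists_min_image {j | γ j < 0} id ⟨j₀, by simpa using hj₀⟩
  simp only [mem_filter, mem_univ, true_and, id] at hj hjmin
  have hbefore : ∀ m < j, 0 ≤ γ m := fun m hm => not_lt.mp fun h => (hjmin m h).not_gt hm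
  have hsplit : ∑ m with m ≤ j, γ m = γ j + ∑ m with m < j, γ m := by
    rw [show filter (· ≤ j) univ = insert j (filter (· < j) univ) by
      ext; simp [le_iff_lt_or_eq, or_comm], sum_insert (by simp)]
  obtain ⟨i, hi, hγi⟩ := exists_lt_of_sum_lt (f := 0) (s := {m | m < j}) (g := γ)
    (by simp only [Pi.zero_apply, sum_const_zero]; linarith [hprefix j])
  simp only [mem_filter, mem_univ, true_and] at hi
  exact ⟨i, j, hi, hγi, hj, sub_root_mem_prefixCone ⟨hsum, hprefix⟩ hi hγi hbefore⟩

theorem exists_posRoots_sum_eq {γ : ι → ℤ} (hγ : γ ∈ prefixCone ι) :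
    ∃ m : Multiset (ι → ℤ), (∀ x ∈ m, x ∈ posRoots ι) ∧ m.sum = γ ∧
      Multiset.card m = posPartSum γ := by
  induction hn : posPartSum γ generalizing γ with
  | zero =>
    obtain rfl : γ = 0 := by
      by_contra hne
      exact (posPartSum_pos hγ.1 hne).ne' hn
    exact ⟨0, by simp, by simp, rfl⟩
  | succ n ih =>
    obtain ⟨i, j, hij, hi, hj, hmem⟩ :=
      exists_sub_root_mem_prefixCone hγ (by rintro rfl; simp [posPartSum] at hn)
    obtain ⟨m, hm, hsum, hcard⟩ := ih hmem (by rw [posPartSum_sub_root hi hj] at hn; omega)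
    refine ⟨root i j ::ₘ m, ?_, by simp [hsum], by simp [hcard]⟩
    simpa using ⟨⟨i, j, hij, rfl⟩, hm⟩

end prefixCone

end TypeA

open TypeA in
/-- In type `A_ℓ`, for every `γ` in the ℕ-span of the positive roots, the length
(minimal number of arbitrary roots summing to `γ`) equals the positive length
(minimal number of positive roots summing to `γ`). -/
theorem length_eq_posLength_A (ℓ : ℕ) (γ : Fin (ℓ + 1) → ℤ)
    (hγ : γ ∈ AddSubmonoid.closure (posRootsA ℓ)) :
    minLen (rootsA ℓ) γ = minLen (posRootsA ℓ) γ := by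
  rw [rootsA_eq_roots, posRootsA_eq_posRoots] at *
  obtain ⟨m, hm, hsum, hcard⟩ := exists_posRoots_sum_eq (closure_posRoots_le_prefixCone hγ)
  have hlower : ∀ m' : Multiset _, (∀ x ∈ m', x ∈ roots (Fin (ℓ + 1))) → m'.sum = γ →
      posPartSum γ ≤ Multiset.card m' := fun m' hm' hsum' =>
    hsum' ▸ posPartSum_sum_le_card m' hm'
  rw [minLen_eq_of_isLeast ⟨m, fun x hx => posRoots_subset_roots (hm x hx), hsum, hcard⟩ hlower,
    minLen_eq_of_isLeast ⟨m, hm, hsum, hcard⟩ fun m' hm' => hlower m' fun x hx =>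
      posRoots_subset_roots (hm' x hx)]
end

section
/- In type A_ℓ, if γ is in the ℕ-span of the positive roots and α is any positive root, then h(γ + α) ≤ h(γ) + 1, where h(Σ aᵢ αᵢ) = Σ_{i=1}^{ℓ} max(aᵢ − a_{i−1}, 0) with a₀ = 0. -/
/-- In type `A_ℓ`, adding a positive root `α_{h,k} = α_h + ⋯ + α_k`
(`1 ≤ h ≤ k ≤ ℓ`) to an element `γ = Σ aᵢ αᵢ` of the ℕ-span of the positive
roots increases `h(γ) = Σ_{i=1}^{ℓ} max (aᵢ - a_{i-1}) 0` (with `a₀ = 0`,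
truncated subtraction on ℕ) by at most `1`. Here `b` gives the coordinates of
`γ + α_{h,k}`. -/
theorem horizontal_add_posRoot_le (ℓ h k : ℕ) (hh : 1 ≤ h) (hhk : h ≤ k) (hkl : k ≤ ℓ)
    (a b : ℕ → ℕ) (ha0 : a 0 = 0)
    (hb : ∀ i, b i = a i + if h ≤ i ∧ i ≤ k then 1 else 0) :
    ∑ i ∈ Finset.range ℓ, (b (i + 1) - b i) ≤ (∑ i ∈ Finset.range ℓ, (a (i + 1) - a i)) + 1 := by
  calc ∑ i ∈ Finset.range ℓ, (b (i + 1) - b i)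
      ≤ ∑ i ∈ Finset.range ℓ, ((a (i + 1) - a i) + if i = h - 1 then 1 else 0) := by
        apply Finset.sum_le_sum
        intro i _
        rw [hb, hb]
        by_cases hi : i = h - 1
        · rw [if_pos hi]
          split <;> split <;> omega
        · rw [if_neg hi]
          split <;> split <;> omega
    _ ≤ (∑ i ∈ Finset.range ℓ, (a (i + 1) - a i)) + 1 := by
        rw [Finset.sum_add_distrib]
        gcongr
        rw [Finset.sum_ite_eq' (Finset.range ℓ) (h - 1) (fun _ => 1)]
        split <;> omega
end

section
/- In the root system B₃ with Bourbaki numbering, setting β = α₁ + α₂ + 2α₃ and γ = β − α₂ = α₁ + 2α₃, the length of γ is 2 while the positive length of γ is 3; hence the length map and positive length map differ in type B₃. -/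
/-- The positive roots of type `B₃`, realized in `ℤ³`: `eᵢ` and `eᵢ ± eⱼ`
(`i < j`), for the standard positive system with simple roots
`α₁ = e₁ - e₂`, `α₂ = e₂ - e₃`, `α₃ = e₃`. -/
def posRootsB3 : Set (Fin 3 → ℤ) :=
  {v | (∃ i, v = Pi.single i 1) ∨
    ∃ i j, i < j ∧ (v = Pi.single i 1 + Pi.single j 1 ∨ v = Pi.single i 1 - Pi.single j 1)}

/-- All roots of type `B₃`. -/
def rootsB3 : Set (Fin 3 → ℤ) := posRootsB3 ∪ (Neg.neg '' posRootsB3)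

/-- The positive roots, as an explicit finite set. -/
def PRfin : Finset (Fin 3 → ℤ) :=
  {![1,0,0], ![0,1,0], ![0,0,1], ![1,1,0], ![1,0,1], ![0,1,1], ![1,-1,0], ![1,0,-1], ![0,1,-1]}

/-- All roots, as an explicit finite set. -/
def RRfin : Finset (Fin 3 → ℤ) := PRfin ∪ PRfin.image (fun v => -v)

lemma pos_sub : ∀ v ∈ posRootsB3, v ∈ PRfin := by
  rintro v (⟨i, rfl⟩ | ⟨i, j, hij, (rfl | rfl)⟩) <;>
    fin_cases i <;> try fin_cases j
  all_goals first
    | exact absurd hij (by decide)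
    | decide

lemma roots_sub : ∀ v ∈ rootsB3, v ∈ RRfin := by
  rintro v (h | ⟨w, hw, rfl⟩)
  · exact Finset.mem_union_left _ (pos_sub v h)
  · exact Finset.mem_union_right _ (Finset.mem_image_of_mem _ (pos_sub w hw))

/-- In type `B₃`, with `β = α₁ + α₂ + 2α₃` (a root) and
`γ = β - α₂ = α₁ + 2α₃ = e₁ - e₂ + 2e₃`, the length of `γ` is `2` while the
positive length of `γ` is `3`; hence the length and positive length maps differ
in type `B₃`. -/
theorem lengths_differ_B3 :
    (![1, 0, 1] : Fin 3 → ℤ) ∈ rootsB3 ∧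
    (![1, -1, 2] : Fin 3 → ℤ) = ![1, 0, 1] - ![0, 1, -1] ∧
    minLen rootsB3 (![1, -1, 2] : Fin 3 → ℤ) = 2 ∧
    minLen posRootsB3 (![1, -1, 2] : Fin 3 → ℤ) = 3 ∧
    minLen rootsB3 (![1, -1, 2] : Fin 3 → ℤ) ≠ minLen posRootsB3 (![1, -1, 2] : Fin 3 → ℤ) := by
  have h2mem : (2 : ℕ) ∈ {r : ℕ | ∃ m : Multiset (Fin 3 → ℤ),
      (∀ x ∈ m, x ∈ rootsB3) ∧ m.sum = ![1,-1,2] ∧ Multiset.card m = r} := by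
    refine ⟨{![1,0,1], ![0,-1,1]}, ?_, ?_, rfl⟩
    · intro x hx
      simp only [Multiset.insert_eq_cons, Multiset.mem_cons, Multiset.mem_singleton] at hx
      rcases hx with rfl | rfl
      · exact Or.inl (Or.inr ⟨0, 2, by decide, Or.inl (by decide)⟩)
      · exact Or.inr ⟨![0,1,-1], Or.inr ⟨1, 2, by decide, Or.inr (by decide)⟩, by decide⟩
    · show (![1,0,1] + (![0,-1,1] + 0) : Fin 3 → ℤ) = ![1,-1,2]
      decide
  have h3mem : (3 : ℕ) ∈ {r : ℕ | ∃ m : Multiset (Fin 3 → ℤ),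
      (∀ x ∈ m, x ∈ posRootsB3) ∧ m.sum = ![1,-1,2] ∧ Multiset.card m = r} := by
    refine ⟨{![1,-1,0], ![0,0,1], ![0,0,1]}, ?_, ?_, rfl⟩
    · intro x hx
      simp only [Multiset.insert_eq_cons, Multiset.mem_cons, Multiset.mem_singleton] at hx
      rcases hx with rfl | rfl | rfl
      · exact Or.inr ⟨0, 1, by decide, Or.inr (by decide)⟩
      all_goals exact Or.inl ⟨2, by decide⟩
    · show (![1,-1,0] + (![0,0,1] + (![0,0,1] + 0)) : Fin 3 → ℤ) = ![1,-1,2]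
      decide
  have hlen2 : minLen rootsB3 (![1, -1, 2] : Fin 3 → ℤ) = 2 := by
    refine le_antisymm (Nat.sInf_le h2mem) (le_csInf ⟨2, h2mem⟩ ?_)
    rintro r ⟨m, hm, hsum, hcard⟩
    by_contra hlt
    push_neg at hlt
    interval_cases r
    · rw [Multiset.card_eq_zero] at hcard; subst hcard
      exact (by decide : ((0 : Fin 3 → ℤ)) ≠ ![1,-1,2]) hsum
    · rw [Multiset.card_eq_one] at hcard
      obtain ⟨a, rfl⟩ := hcard
      have ha := roots_sub a (hm a (by simp))
      rw [Multiset.sum_singleton] at hsum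
      exact (by decide : ∀ x ∈ RRfin, x ≠ ![1,-1,2]) a ha hsum
  have hlen3 : minLen posRootsB3 (![1, -1, 2] : Fin 3 → ℤ) = 3 := by
    refine le_antisymm (Nat.sInf_le h3mem) (le_csInf ⟨3, h3mem⟩ ?_)
    rintro r ⟨m, hm, hsum, hcard⟩
    by_contra hlt
    push_neg at hlt
    interval_cases r
    · rw [Multiset.card_eq_zero] at hcard; subst hcard
      exact (by decide : ((0 : Fin 3 → ℤ)) ≠ ![1,-1,2]) hsum
    · rw [Multiset.card_eq_one] at hcard
      obtain ⟨a, rfl⟩ := hcard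
      have ha := pos_sub a (hm a (by simp))
      rw [Multiset.sum_singleton] at hsum
      exact (by decide : ∀ x ∈ PRfin, x ≠ ![1,-1,2]) a ha hsum
    · rw [Multiset.card_eq_two] at hcard
      obtain ⟨a, b, rfl⟩ := hcard
      have ha := pos_sub a (hm a (by simp))
      have hb := pos_sub b (hm b (by simp))
      have hsum' : a + b = ![1,-1,2] := by
        have : ({a, b} : Multiset (Fin 3 → ℤ)).sum = a + b := by
          simp [Multiset.insert_eq_cons]
        rw [this] at hsum; exact hsum
      exact (by decide : ∀ x ∈ PRfin, ∀ y ∈ PRfin, x + y ≠ ![1,-1,2]) a ha b hb hsum'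
  exact ⟨Or.inl (Or.inr ⟨0, 2, by decide, Or.inl (by decide)⟩), by decide, hlen2, hlen3,
    by rw [hlen2, hlen3]; decide⟩
end

section
/- Let Φ be a crystallographic root system, F a face of the root polytope P_Φ defined by a functional λ with (λ, u) = 1 on F and (λ, β) ≤ 1 for all roots β. Then the monoid M(F) = C(V(F)) ∩ R is the union of the sets γ + N(F) where γ ranges over the ≤_F-minimal elements of M(F) (including 0); in particular every descending chain in (M(F), ≤_F) is finite. -/
open scoped RealInnerProductSpace

/-- A crystallographic reduced root system in a real inner product space. -/
structure IsRootSystem {E : Type*} [NormedAddCommGroup E] [InnerProductSpace ℝ E]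
    (Φ : Set E) : Prop where
  finite : Φ.Finite
  nonempty : Φ.Nonempty
  zero_not_mem : (0 : E) ∉ Φ
  span_eq_top : Submodule.span ℝ Φ = ⊤
  reflection_mem : ∀ α ∈ Φ, ∀ β ∈ Φ, β - (2 * ⟪α, β⟫ / ⟪α, α⟫) • α ∈ Φ
  crystallographic : ∀ α ∈ Φ, ∀ β ∈ Φ, ∃ n : ℤ, 2 * ⟪α, β⟫ / ⟪α, α⟫ = (n : ℝ)
  reduced : ∀ α ∈ Φ, ∀ t : ℝ, t • α ∈ Φ → t = 1 ∨ t = -1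

/-- The cone of nonnegative rational linear combinations of elements of `V`. -/
def coneQ {E : Type*} [NormedAddCommGroup E] [InnerProductSpace ℝ E] (V : Set E) : Set E :=
  {x | ∃ c : E →₀ ℚ, (∀ y, 0 ≤ c y) ∧ ↑c.support ⊆ V ∧ (c.sum fun y a => (a : ℝ) • y) = x}

/-!
The height `x ↦ ⟪l, x⟫` is nonnegative on `M(F)` and at least `1` on every nonzero element of
`N(F)`, since it equals `1` on `V(F)`. So each strict `≤_F`-descent inside `M(F)` lowers the height
by at least `1`, which makes strict descent well founded; minimal elements below any `x` and the
finiteness of descending chains both follow.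
-/

section Descent

variable {G : Type*} [AddCommGroup G]

/-- For `S = M(F)` and `N = N(F)` this is `y <_F x` with `y ∈ M(F)`. -/
def StrictlyBelowIn (S : Set G) (N : AddSubmonoid G) (y x : G) : Prop :=
  y ∈ S ∧ x - y ∈ N ∧ y ≠ x

theorem eq_zero_or_one_le_of_mem_closure (h : G →+ ℝ) {V : Set G} (hV : ∀ v ∈ V, 1 ≤ h v)
    {n : G} (hn : n ∈ AddSubmonoid.closure V) : n = 0 ∨ 1 ≤ h n := by
  induction hn using AddSubmonoid.closure_induction with
  | mem v hv => exact .inr (hV v hv)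
  | zero => exact .inl rfl
  | add a b _ _ ha hb =>
    rcases ha with rfl | ha
    · simpa using hb
    rcases hb with rfl | hb
    · simpa using Or.inr ha
    exact .inr (by rw [map_add]; linarith)

theorem wellFounded_strictlyBelowIn {S : Set G} {N : AddSubmonoid G} (h : G →+ ℝ)
    (hS : ∀ x ∈ S, 0 ≤ h x) (hN : ∀ n ∈ N, n ≠ 0 → 1 ≤ h n) :
    WellFounded (StrictlyBelowIn S N) := by
  refine Subrelation.wf (fun {y x} hyx => ?_) (measure fun x => ⌈h x⌉₊).wf
  obtain ⟨hy, hxy, hne⟩ := hyx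
  have hdrop : h y + 1 ≤ h x := by
    have := hN _ hxy (sub_ne_zero.mpr hne.symm)
    rw [map_sub] at this
    linarith
  calc ⌈h y⌉₊ < ⌈h y⌉₊ + 1 := Nat.lt_succ_self _
    _ = ⌈h y + 1⌉₊ := (Nat.ceil_add_one (hS y hy)).symm
    _ ≤ ⌈h x⌉₊ := Nat.ceil_mono hdrop

theorem exists_minimal_sub_mem {S : Set G} {N : AddSubmonoid G}
    (hwf : WellFounded (StrictlyBelowIn S N)) {x : G} (hx : x ∈ S) :
    ∃ γ ∈ S, (∀ y ∈ S, γ - y ∈ N → y = γ) ∧ x - γ ∈ N := by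
  obtain ⟨γ, ⟨hγ, hxγ⟩, hmin⟩ := hwf.has_min {γ | γ ∈ S ∧ x - γ ∈ N} ⟨x, hx, by simp⟩
  refine ⟨γ, hγ, fun y hy hγy => by_contra fun hne => ?_, hxγ⟩
  have hxy : x - y ∈ N := by simpa using N.add_mem hxγ hγy
  exact hmin y ⟨hy, hxy⟩ ⟨hy, hγy, hne⟩

end Descent

theorem inner_nonneg_of_mem_coneQ {E : Type*} [NormedAddCommGroup E] [InnerProductSpace ℝ E]
    {l : E} {V : Set E} (hV : ∀ v ∈ V, 0 ≤ ⟪l, v⟫) {x : E} (hx : x ∈ coneQ V) :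
    0 ≤ ⟪l, x⟫ := by
  obtain ⟨c, hc, hcV, rfl⟩ := hx
  rw [Finsupp.sum, inner_sum]
  refine Finset.sum_nonneg fun y hy => ?_
  rw [real_inner_smul_right]
  exact mul_nonneg (by exact_mod_cast hc y) (hV y (hcV hy))

theorem monoid_union_of_minimal_general {E : Type*} [NormedAddCommGroup E]
    [InnerProductSpace ℝ E] (Φ : Set E)
    (l : E)
    (V : Set E) (hV : V = {β ∈ Φ | ⟪l, β⟫ = 1})
    (N : AddSubmonoid E) (hN : N = AddSubmonoid.closure V)
    (M : Set E) (hM : M = coneQ V ∩ (AddSubgroup.closure Φ : Set E)) :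
    (∀ x ∈ M, ∃ γ ∈ M, (∀ y ∈ M, γ - y ∈ N → y = γ) ∧ x - γ ∈ N) ∧
    ∀ f : ℕ → E, (∀ n, f n ∈ M) →
      ¬ (∀ n, f n - f (n + 1) ∈ N ∧ f (n + 1) ≠ f n) := by
  have hVl : ∀ v ∈ V, ⟪l, v⟫ = 1 := fun v hv => (hV ▸ hv).2
  let height : E →+ ℝ := (innerₛₗ ℝ l).toAddMonoidHom
  have hwf : WellFounded (StrictlyBelowIn M N) := by
    refine wellFounded_strictlyBelowIn height (fun x hx => ?_) (fun n hn hn0 => ?_)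
    · exact inner_nonneg_of_mem_coneQ (fun v hv => zero_le_one.trans (hVl v hv).ge) (hM ▸ hx).1
    · exact (eq_zero_or_one_le_of_mem_closure height (fun v hv => (hVl v hv).ge)
        (hN ▸ hn)).resolve_left hn0
  refine ⟨fun x hx => exists_minimal_sub_mem hwf hx, fun f hf hchain => ?_⟩
  exact (wellFounded_iff_isEmpty_descending_chain.mp hwf).false ⟨f, fun n => ⟨hf _, hchain n⟩⟩

/-- Let `F` be the face of the root polytope exposed by a functional `l` with
`(l, β) ≤ 1` on `Φ`, `V(F) = {β ∈ Φ | (l, β) = 1}`, `N(F)` the ℕ-span of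
`V(F)` and `M(F) = C(V(F)) ∩ R`.  Then `M(F)` is the union of the sets
`γ + N(F)` with `γ` ranging over the `≤_F`-minimal elements of `M(F)`
(including `0`); in particular every strictly `≤_F`-descending chain in `M(F)`
is finite. -/
theorem monoid_union_of_minimal {E : Type*} [NormedAddCommGroup E]
    [InnerProductSpace ℝ E] (Φ : Set E) (hΦ : IsRootSystem Φ)
    (l : E) (hl : ∀ β ∈ Φ, ⟪l, β⟫ ≤ 1)
    (V : Set E) (hV : V = {β ∈ Φ | ⟪l, β⟫ = 1})
    (N : AddSubmonoid E) (hN : N = AddSubmonoid.closure V)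
    (M : Set E) (hM : M = coneQ V ∩ (AddSubgroup.closure Φ : Set E)) :
    (∀ x ∈ M, ∃ γ ∈ M, (∀ y ∈ M, γ - y ∈ N → y = γ) ∧ x - γ ∈ N) ∧
    ∀ f : ℕ → E, (∀ n, f n ∈ M) →
      ¬ (∀ n, f n - f (n + 1) ∈ N ∧ f (n + 1) ≠ f n) :=
  monoid_union_of_minimal_general Φ l V hV N hN M hM
end

section
/- Let Φ be irreducible with base Δ and let δ ≠ δ' be simple roots. If τ ∈ W satisfies (τω̌_δ, ω_{δ'}) < (ω̌_δ, ω_{δ'}), then ω̌_δ − τω̌_δ ≥ Σ_{ε ∈ [δ,δ']} ε̌, where [δ,δ'] is the set of simple roots on the path from δ to δ' in the Dynkin diagram and ≥ denotes the dominance order on the coroot lattice (difference is a nonnegative integer combination of simple coroots). -/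
open scoped RealInnerProductSpace Classical
open Finset

variable {E : Type*} [NormedAddCommGroup E] [InnerProductSpace ℝ E] [FiniteDimensional ℝ E]

/-- The orthogonal reflection in the hyperplane orthogonal to `α`. -/
noncomputable def sref (α : E) : E ≃ₗᵢ[ℝ] E := Submodule.reflection (ℝ ∙ α)ᗮ

/-- The group generated by the reflections `s_α`, `α ∈ B`. -/
noncomputable def reflSubgroup (B : Set E) : Subgroup (E ≃ₗᵢ[ℝ] E) :=
  Subgroup.closure {w | ∃ α ∈ B, w = sref α}

/-- The Weyl group of `Φ`. -/
noncomputable def WeylGroup (Φ : Set E) : Subgroup (E ≃ₗᵢ[ℝ] E) := reflSubgroup Φ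

/-- Connectivity of a set of nodes, two nodes being adjacent when they are not
orthogonal (this is the Dynkin-diagram adjacency for simple roots). -/
def IsConnectedSet (S : Set E) : Prop :=
  ∀ x ∈ S, ∀ y ∈ S, Relation.ReflTransGen (fun a b => a ∈ S ∧ b ∈ S ∧ ⟪a, b⟫ ≠ 0) x y

/-- The connected component of `x` in `S` for the non-orthogonality adjacency. -/
def component (S : Set E) (x : E) : Set E :=
  {y ∈ S | Relation.ReflTransGen (fun a b => a ∈ S ∧ b ∈ S ∧ ⟪a, b⟫ ≠ 0) x y}

/-- The coroot `ε̌ = 2ε/(ε,ε)` of `ε`. -/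
noncomputable def coroot (ε : E) : E := (2 / ⟪ε, ε⟫) • ε

/-!
Put `λ = ω̌_δ`. The Weyl group is generated by simple reflections, so `τ⁻¹` is a word in them.
Split off the last letter of a word with product `w s_ε`: either `w ε` is a negative root, and
then `w s_ε` is the product of a shorter word by the deletion argument, or
`(w s_ε)⁻¹ λ = w⁻¹ λ - ⟪w ε, λ⟫ ε̌` with `⟪w ε, λ⟫` the `δ`-coordinate of a positive root, a
natural number; when it is nonzero, `ε` is `δ` or adjacent to the support already built.
Hence `λ - τλ` is a nonnegative integral combination of simple coroots whose support together
with `δ` is connected. The hypothesis on `τ` makes the coefficient of `δ'` positive, and the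
coefficient of `δ` is positive because `⟪λ - τλ, λ⟫ = ‖λ - τλ‖² / 2`; minimality of `[δ, δ']`
puts the whole path into the support.
-/

section

omit [FiniteDimensional ℝ E]

theorem inner_smul_coroot (α x : E) : ⟪α, x⟫ • coroot α = (2 * ⟪α, x⟫ / ⟪α, α⟫) • α := by
  rw [coroot, smul_smul]
  ring_nf

theorem sref_apply (α x : E) : sref α x = x - ⟪α, x⟫ • coroot α := by
  rw [sref, Submodule.reflection_orthogonal_apply, Submodule.reflection_singleton_apply,
    inner_smul_coroot]
  simp only [RCLike.ofReal_real_eq_id, id_eq, ← real_inner_self_eq_norm_sq]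
  match_scalars <;> ring

theorem sref_self (α : E) : sref α α = -α :=
  Submodule.reflection_orthogonalComplement_singleton_eq_neg α

theorem sref_sref (α x : E) : sref α (sref α x) = x := Submodule.reflection_reflection _ x

theorem sref_mul_self (α : E) : sref α * sref α = 1 := Submodule.reflection_mul_reflection _

theorem sref_inv (α : E) : (sref α)⁻¹ = sref α := Submodule.reflection_inv

theorem sref_neg (α : E) : sref (-α) = sref α := by
  ext x
  simp [sref_apply, coroot]

theorem sref_map (f : E ≃ₗᵢ[ℝ] E) (α : E) : sref (f α) = f * sref α * f⁻¹ := by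
  ext x
  obtain ⟨y, rfl⟩ := f.surjective x
  simp [sref_apply, coroot, f.inner_map_map]

noncomputable def wordProd (l : List E) : E ≃ₗᵢ[ℝ] E := (l.map sref).prod

@[simp]
theorem wordProd_nil : wordProd ([] : List E) = 1 := rfl

@[simp]
theorem wordProd_cons (α : E) (l : List E) : wordProd (α :: l) = sref α * wordProd l :=
  List.prod_cons

@[simp]
theorem wordProd_append (l₁ l₂ : List E) : wordProd (l₁ ++ l₂) = wordProd l₁ * wordProd l₂ := by
  simp [wordProd]

theorem wordProd_reverse (l : List E) : wordProd l.reverse = (wordProd l)⁻¹ := by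
  induction l with
  | nil => simp
  | cons α l ih => simp [ih, sref_inv]

theorem exists_wordProd_eq_of_mem_reflSubgroup {B : Set E} {w : E ≃ₗᵢ[ℝ] E}
    (hw : w ∈ reflSubgroup B) : ∃ l : List E, (∀ ε ∈ l, ε ∈ B) ∧ wordProd l = w := by
  induction hw using Subgroup.closure_induction with
  | mem _ h =>
    obtain ⟨α, hα, rfl⟩ := h
    exact ⟨[α], by simpa using hα, by simp⟩
  | one => exact ⟨[], by simp, rfl⟩
  | mul _ _ _ _ h₁ h₂ =>
    obtain ⟨l₁, hl₁, rfl⟩ := h₁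
    obtain ⟨l₂, hl₂, rfl⟩ := h₂
    exact ⟨l₁ ++ l₂, fun ε hε => (List.mem_append.1 hε).elim (hl₁ ε) (hl₂ ε), by simp⟩
  | inv _ _ h =>
    obtain ⟨l, hl, rfl⟩ := h
    exact ⟨l.reverse, fun ε hε => hl ε (List.mem_reverse.1 hε), wordProd_reverse l⟩

section Cone

def IsBiorthogonal (Δ : Finset E) (cw : E → E) : Prop :=
  ∀ α ∈ Δ, ∀ β ∈ Δ, ⟪cw α, β⟫ = if α = β then 1 else 0

variable {Δ : Finset E} {cw : E → E} {x : E}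

theorem inner_coweight_coroot (hcw : IsBiorthogonal Δ cw) {α γ : E} (hα : α ∈ Δ)
    (hγ : γ ∈ Δ) : ⟪cw α, coroot γ⟫ = if α = γ then 2 / ⟪α, α⟫ else 0 := by
  rw [coroot, inner_smul_right, hcw α hα γ hγ]
  split_ifs with h <;> simp [h]

theorem exists_inner_coweight_eq_natCast (hcw : IsBiorthogonal Δ cw)
    (hx : x ∈ AddSubmonoid.closure (Δ : Set E)) {γ : E} (hγ : γ ∈ Δ) :
    ∃ n : ℕ, ⟪cw γ, x⟫ = n := by
  induction hx using AddSubmonoid.closure_induction with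
  | mem y hy => exact ⟨if γ = y then 1 else 0, by rw [hcw γ hγ y hy]; split_ifs <;> simp⟩
  | zero => exact ⟨0, by simp⟩
  | add y z _ _ hy hz =>
    obtain ⟨m, hm⟩ := hy
    obtain ⟨n, hn⟩ := hz
    exact ⟨m + n, by rw [inner_add_right, hm, hn, Nat.cast_add]⟩

theorem inner_coweight_nonneg (hcw : IsBiorthogonal Δ cw)
    (hx : x ∈ AddSubmonoid.closure (Δ : Set E)) {γ : E} (hγ : γ ∈ Δ) : 0 ≤ ⟪cw γ, x⟫ := by
  obtain ⟨n, hn⟩ := exists_inner_coweight_eq_natCast hcw hx hγ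
  exact hn ▸ n.cast_nonneg

theorem eq_sum_inner_coweight_smul (hcw : IsBiorthogonal Δ cw)
    (hx : x ∈ AddSubmonoid.closure (Δ : Set E)) : x = ∑ γ ∈ Δ, ⟪cw γ, x⟫ • γ := by
  induction hx using AddSubmonoid.closure_induction with
  | mem y hy =>
    have hyΔ : y ∈ Δ := hy
    rw [sum_congr rfl fun γ hγ => by rw [hcw γ hγ y hyΔ, ite_smul, one_smul, zero_smul],
      sum_ite_eq' Δ y (fun γ => γ), if_pos hyΔ]
  | zero => simp
  | add y z _ _ hy hz =>
    simp only [inner_add_right, add_smul, sum_add_distrib]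
    rw [← hy, ← hz]

theorem exists_inner_pos_of_mem_closure (hcw : IsBiorthogonal Δ cw)
    (hx : x ∈ AddSubmonoid.closure (Δ : Set E)) (hx0 : x ≠ 0) : ∃ ε ∈ Δ, 0 < ⟪ε, x⟫ := by
  by_contra! h
  have : ⟪x, x⟫ ≤ 0 := by
    nth_rw 1 [eq_sum_inner_coweight_smul hcw hx]
    rw [sum_inner]
    exact sum_nonpos fun γ hγ => by
      rw [real_inner_smul_left]
      exact mul_nonpos_of_nonneg_of_nonpos (inner_coweight_nonneg hcw hx hγ) (h γ hγ)
  exact hx0 (real_inner_self_nonpos.1 this)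

end Cone

theorem isConnectedSet_insert {T : Set E} (hT : IsConnectedSet T) {x γ₀ : E} (hγ₀ : γ₀ ∈ T)
    (hxγ₀ : ⟪x, γ₀⟫ ≠ 0) : IsConnectedSet (insert x T) := by
  set R := fun a b : E => a ∈ insert x T ∧ b ∈ insert x T ∧ ⟪a, b⟫ ≠ 0
  have hmono : ∀ a ∈ T, ∀ b ∈ T, Relation.ReflTransGen R a b := fun a ha b hb =>
    Relation.ReflTransGen.mono (fun _ _ ⟨hu, hv, huv⟩ => ⟨Or.inr hu, Or.inr hv, huv⟩) a b
      (hT a ha b hb)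
  have hx : x ∈ insert x T := Set.mem_insert x T
  have hγ₀' : γ₀ ∈ insert x T := Set.mem_insert_of_mem x hγ₀
  have hto : ∀ a ∈ insert x T, Relation.ReflTransGen R a γ₀ := by
    rintro a (rfl | ha)
    · exact .single ⟨hx, hγ₀', hxγ₀⟩
    · exact hmono a ha γ₀ hγ₀
  have hfrom : ∀ b ∈ insert x T, Relation.ReflTransGen R γ₀ b := by
    rintro b (rfl | hb)
    · exact .single ⟨hγ₀', hx, by rwa [real_inner_comm]⟩
    · exact hmono γ₀ hγ₀ b hb
  exact fun a ha b hb => (hto a ha).trans (hfrom b hb)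

theorem exists_mem_inner_ne_zero_of_inner_sum_ne_zero {Δ : Finset E} {c : E → ℕ} {ε : E}
    (h : ⟪ε, ∑ γ ∈ Δ, (c γ : ℝ) • coroot γ⟫ ≠ 0) : ∃ γ ∈ Δ, c γ ≠ 0 ∧ ⟪ε, γ⟫ ≠ 0 := by
  rw [inner_sum] at h
  obtain ⟨γ, hγ, hne⟩ := exists_ne_zero_of_sum_ne_zero h
  refine ⟨γ, hγ, fun h0 => hne (by simp [h0]), fun h0 => hne ?_⟩
  rw [coroot, smul_smul, inner_smul_right, h0, mul_zero]

theorem exists_mem_insert_support_inner_ne_zero {Δ : Finset E} {cw : E → E}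
    (hcw : IsBiorthogonal Δ cw) {c : E → ℕ} {δ ε μ : E} (hδ : δ ∈ Δ) (hε : ε ∈ Δ) (hε0 : ε ≠ 0)
    (hc : cw δ - μ = ∑ γ ∈ Δ, (c γ : ℝ) • coroot γ) (hεμ : ⟪ε, μ⟫ ≠ 0) :
    ∃ γ ∈ insert δ {γ ∈ Δ | c γ ≠ 0}, ⟪ε, γ⟫ ≠ 0 := by
  by_cases hεδ : ε = δ
  · exact ⟨δ, mem_insert_self _ _, hεδ ▸ inner_self_ne_zero.2 hε0⟩
  have hsum : ⟪ε, ∑ γ ∈ Δ, (c γ : ℝ) • coroot γ⟫ ≠ 0 := by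
    rwa [← hc, inner_sub_right, real_inner_comm, hcw δ hδ ε hε, if_neg (Ne.symm hεδ), zero_sub,
      neg_ne_zero]
  obtain ⟨γ, hγ, hcγ, hεγ⟩ := exists_mem_inner_ne_zero_of_inner_sum_ne_zero hsum
  exact ⟨γ, mem_insert_of_mem (mem_filter.2 ⟨hγ, hcγ⟩), hεγ⟩

theorem isConnectedSet_insert_support_add_single {Δ : Finset E} {c : E → ℕ} {δ ε : E} {m : ℕ}
    (hconn : IsConnectedSet (↑(insert δ {γ ∈ Δ | c γ ≠ 0}) : Set E)) (hε : ε ∈ Δ)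
    (hadj : m ≠ 0 → ∃ γ ∈ insert δ {γ ∈ Δ | c γ ≠ 0}, ⟪ε, γ⟫ ≠ 0) :
    IsConnectedSet (↑(insert δ {γ ∈ Δ | (c + Pi.single ε m : E → ℕ) γ ≠ 0}) : Set E) := by
  rcases eq_or_ne m 0 with rfl | hm
  · simpa using hconn
  have hsupp : {γ ∈ Δ | (c + Pi.single ε m : E → ℕ) γ ≠ 0} = insert ε {γ ∈ Δ | c γ ≠ 0} := by
    ext γ
    by_cases hγ : γ = ε <;> simp [hγ, hε, hm]
  obtain ⟨γ₀, hγ₀, hεγ₀⟩ := hadj hm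
  rw [hsupp, insert_comm, coe_insert]
  exact isConnectedSet_insert hconn (mem_coe.2 hγ₀) hεγ₀

structure IsBase (Φ Δ : Finset E) (cw : E → E) : Prop where
  isRootSystem : IsRootSystem (Φ : Set E)
  subset : (Δ : Set E) ⊆ Φ
  mem_closure_or_neg_mem_closure : ∀ β ∈ Φ, β ∈ AddSubmonoid.closure (Δ : Set E) ∨
    -β ∈ AddSubmonoid.closure (Δ : Set E)
  isBiorthogonal : IsBiorthogonal Δ cw

def IsPosRoot (Φ Δ : Finset E) (β : E) : Prop :=
  β ∈ Φ ∧ β ∈ AddSubmonoid.closure (Δ : Set E)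

namespace IsBase

variable {Φ Δ : Finset E} {cw : E → E} {α β ε : E}

theorem ne_zero_of_mem (hB : IsBase Φ Δ cw) (hβ : β ∈ Φ) : β ≠ 0 :=
  fun h => hB.isRootSystem.zero_not_mem (h ▸ hβ)

theorem sref_mem (hB : IsBase Φ Δ cw) (hα : α ∈ Φ) (hβ : β ∈ Φ) : sref α β ∈ Φ := by
  rw [sref_apply, inner_smul_coroot]
  exact_mod_cast hB.isRootSystem.reflection_mem α hα β hβ

theorem isPosRoot_of_mem (hB : IsBase Φ Δ cw) (hε : ε ∈ Δ) : IsPosRoot Φ Δ ε :=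
  ⟨hB.subset hε, AddSubmonoid.subset_closure hε⟩

theorem isPosRoot_or_isPosRoot_neg (hB : IsBase Φ Δ cw) (hβ : β ∈ Φ) :
    IsPosRoot Φ Δ β ∨ IsPosRoot Φ Δ (-β) := by
  have hnβ : -β ∈ Φ := sref_self β ▸ hB.sref_mem hβ hβ
  exact (hB.mem_closure_or_neg_mem_closure β hβ).imp (⟨hβ, ·⟩) (⟨hnβ, ·⟩)

theorem isPosRoot_sref (hB : IsBase Φ Δ cw) (hε : ε ∈ Δ) (hβ : IsPosRoot Φ Δ β)
    (hne : β ≠ ε) : IsPosRoot Φ Δ (sref ε β) := by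
  have hcw := hB.isBiorthogonal
  refine (hB.isPosRoot_or_isPosRoot_neg (hB.sref_mem (hB.subset hε) hβ.1)).resolve_right
    fun hneg => hne ?_
  -- Off `ε`, the coordinates of `β` and of `s_ε β` agree, and have opposite signs.
  have hcoord : ∀ γ ∈ Δ, γ ≠ ε → ⟪cw γ, β⟫ = 0 := by
    intro γ hγ hγε
    have h := inner_coweight_nonneg hcw hneg.2 hγ
    rw [inner_neg_right, sref_apply, inner_sub_right, inner_smul_right,
      inner_coweight_coroot hcw hγ hε, if_neg hγε, mul_zero, sub_zero] at h
    exact le_antisymm (by linarith) (inner_coweight_nonneg hcw hβ.2 hγ)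
  have hβε : β = ⟪cw ε, β⟫ • ε := by
    conv_lhs => rw [eq_sum_inner_coweight_smul hcw hβ.2]
    exact sum_eq_single ε (fun γ hγ hγε => by rw [hcoord γ hγ hγε, zero_smul]) (absurd hε)
  rcases hB.isRootSystem.reduced ε (hB.subset hε) _ (hβε ▸ hβ.1) with h | h
  · rw [hβε, h, one_smul]
  · linarith [inner_coweight_nonneg hcw hβ.2 hε]

/-- Induction on the height `⟪∑ γ ∈ Δ, cw γ, α⟫`: for a non-simple positive root `α` some simple
`ε` has `⟪ε, α⟫ > 0`, and then `s_ε α` is a positive root of height lower by the positive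
integer `2⟪ε, α⟫/⟪ε, ε⟫`, with `s_α = s_ε s_{s_ε α} s_ε`. -/
theorem sref_mem_reflSubgroup (hB : IsBase Φ Δ cw) (hα : IsPosRoot Φ Δ α) :
    sref α ∈ reflSubgroup (Δ : Set E) := by
  have hcw := hB.isBiorthogonal
  set ρ := ∑ γ ∈ Δ, cw γ
  obtain ⟨n, hn⟩ := exists_nat_gt ⟪ρ, α⟫
  induction n generalizing α with
  | zero =>
    refine absurd hn (not_lt.2 ?_)
    rw [Nat.cast_zero, sum_inner]
    exact sum_nonneg fun γ hγ => inner_coweight_nonneg hcw hα.2 hγ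
  | succ n ih =>
    by_cases hαΔ : α ∈ Δ
    · exact Subgroup.subset_closure ⟨α, hαΔ, rfl⟩
    obtain ⟨ε, hε, hεα⟩ :=
      exists_inner_pos_of_mem_closure hcw hα.2 (hB.ne_zero_of_mem hα.1)
    have hεε : 0 < ⟪ε, ε⟫ := real_inner_self_pos.2 (hB.ne_zero_of_mem (hB.subset hε))
    have hk : 1 ≤ ⟪ε, α⟫ * (2 / ⟪ε, ε⟫) := by
      obtain ⟨k, hk⟩ := hB.isRootSystem.crystallographic ε (hB.subset hε) α hα.1
      have hpos : (0 : ℝ) < k := hk ▸ div_pos (by linarith) hεε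
      rw [← mul_div_assoc, mul_comm, hk]
      exact_mod_cast (Int.cast_pos.1 hpos : 0 < k)
    have hρε : ⟪ρ, coroot ε⟫ = 2 / ⟪ε, ε⟫ := by
      rw [sum_inner, sum_congr rfl fun γ hγ => inner_coweight_coroot hcw hγ hε,
        sum_ite_eq' Δ ε, if_pos hε]
    have hβ : ⟪ρ, sref ε α⟫ < n := by
      rw [sref_apply, inner_sub_right, inner_smul_right, hρε]
      push_cast at hn
      linarith
    have hsβ := ih (hB.isPosRoot_sref hε hα fun h => hαΔ (h ▸ hε)) hβ
    have hsε : sref ε ∈ reflSubgroup (Δ : Set E) := Subgroup.subset_closure ⟨ε, hε, rfl⟩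
    rw [← sref_sref ε α, sref_map, sref_inv]
    exact mul_mem (mul_mem hsε hsβ) hsε

theorem weylGroup_le_reflSubgroup (hB : IsBase Φ Δ cw) :
    WeylGroup (Φ : Set E) ≤ reflSubgroup (Δ : Set E) := by
  refine (Subgroup.closure_le _).2 ?_
  rintro _ ⟨α, hα, rfl⟩
  rcases hB.isPosRoot_or_isPosRoot_neg hα with h | h
  · exact hB.sref_mem_reflSubgroup h
  · simpa [sref_neg] using hB.sref_mem_reflSubgroup h

theorem exists_eq_append_cons_wordProd_eq (hB : IsBase Φ Δ cw) (hβ : IsPosRoot Φ Δ β) :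
    ∀ {l : List E}, (∀ ε ∈ l, ε ∈ Δ) → ¬IsPosRoot Φ Δ (wordProd l β) →
      ∃ l₁ ε l₂, l = l₁ ++ ε :: l₂ ∧ wordProd l₂ β = ε
  | [], _, h => absurd hβ (by simpa using h)
  | α :: l, hl, h => by
    by_cases hlβ : IsPosRoot Φ Δ (wordProd l β)
    · refine ⟨[], α, l, rfl, by_contra fun hne => h ?_⟩
      simpa using hB.isPosRoot_sref (hl α List.mem_cons_self) hlβ hne
    · obtain ⟨l₁, ε, l₂, rfl, h₂⟩ := hB.exists_eq_append_cons_wordProd_eq hβ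
        (fun x hx => hl x (List.mem_cons_of_mem α hx)) hlβ
      exact ⟨α :: l₁, ε, l₂, rfl, h₂⟩

theorem exists_wordProd_eq_mul_sref (hB : IsBase Φ Δ cw) {l : List E} (hl : ∀ ε ∈ l, ε ∈ Δ)
    (hβ : IsPosRoot Φ Δ β) (h : ¬IsPosRoot Φ Δ (wordProd l β)) :
    ∃ l' : List E, l'.length < l.length ∧ l' ⊆ l ∧ wordProd l = wordProd l' * sref β := by
  obtain ⟨l₁, ε, l₂, rfl, hε⟩ := hB.exists_eq_append_cons_wordProd_eq hβ hl h
  refine ⟨l₁ ++ l₂, by simp, fun x hx => ?_, ?_⟩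
  · simp only [List.mem_append, List.mem_cons] at hx ⊢
    tauto
  · -- `s_{l₂ β} = l₂ s_β l₂⁻¹` cancels the letter `ε`.
    rw [wordProd_append, wordProd_cons, ← hε, sref_map]
    simp [mul_assoc]

theorem exists_coweight_sub_wordProd_inv_eq (hB : IsBase Φ Δ cw) {δ : E} (hδ : δ ∈ Δ)
    (l : List E) (hl : ∀ ε ∈ l, ε ∈ Δ) :
    ∃ c : E → ℕ, cw δ - (wordProd l)⁻¹ (cw δ) = ∑ γ ∈ Δ, (c γ : ℝ) • coroot γ ∧
      IsConnectedSet (↑(insert δ {γ ∈ Δ | c γ ≠ 0}) : Set E) := by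
  rcases List.eq_nil_or_concat' l with rfl | ⟨l', ε, rfl⟩
  · refine ⟨0, by simp, fun x hx y hy => ?_⟩
    simp only [Pi.zero_apply, ne_eq, not_true_eq_false, filter_false, insert_empty_eq,
      coe_singleton, Set.mem_singleton_iff] at hx hy
    rw [hx, hy]
  have hl' : ∀ γ ∈ l', γ ∈ Δ := fun γ hγ => hl γ (List.mem_append_left _ hγ)
  have hε : ε ∈ Δ := hl ε (by simp)
  by_cases hpos : IsPosRoot Φ Δ (wordProd l' ε)
  · obtain ⟨c, hc, hconn⟩ := hB.exists_coweight_sub_wordProd_inv_eq hδ l' hl'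
    obtain ⟨m, hm⟩ := exists_inner_coweight_eq_natCast hB.isBiorthogonal hpos.2 hδ
    have hεμ : ⟪ε, (wordProd l')⁻¹ (cw δ)⟫ = m := by
      rw [← (wordProd l').inner_map_map, LinearIsometryEquiv.coe_inv,
        LinearIsometryEquiv.apply_symm_apply, real_inner_comm, hm]
    refine ⟨c + Pi.single ε m, ?_, isConnectedSet_insert_support_add_single hconn hε ?_⟩
    · rw [wordProd_append, wordProd_cons, wordProd_nil, mul_one, mul_inv_rev, sref_inv,
        LinearIsometryEquiv.coe_mul, Function.comp_apply, sref_apply, hεμ]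
      simp only [Pi.add_apply, Nat.cast_add, add_smul, sum_add_distrib, ← hc]
      simp [Pi.single_apply, hε]
      abel
    · exact fun hm0 => exists_mem_insert_support_inner_ne_zero hB.isBiorthogonal hδ hε
        (hB.ne_zero_of_mem (hB.subset hε)) hc (hεμ ▸ Nat.cast_ne_zero.2 hm0)
  · obtain ⟨l'', hlen, hsub, heq⟩ :=
      hB.exists_wordProd_eq_mul_sref hl' (hB.isPosRoot_of_mem hε) hpos
    have : wordProd (l' ++ [ε]) = wordProd l'' := by
      rw [wordProd_append, heq, wordProd_cons, wordProd_nil, mul_one, mul_assoc, sref_mul_self,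
        mul_one]
    rw [this]
    exact hB.exists_coweight_sub_wordProd_inv_eq hδ l'' fun γ hγ => hl' γ (hsub hγ)
termination_by l.length
decreasing_by all_goals subst_vars; simp only [List.length_append, List.length_singleton]; omega

end IsBase

theorem inner_sub_map_self (f : E ≃ₗᵢ[ℝ] E) (x : E) : ⟪x - f x, x⟫ = ‖x - f x‖ ^ 2 / 2 := by
  rw [← real_inner_self_eq_norm_sq]
  simp only [inner_sub_left, inner_sub_right, f.inner_map_map, real_inner_comm x (f x)]
  ring

theorem inner_sum_natCast_smul {ι : Type*} {s : Finset ι} {c : ι → ℕ} {v : ι → E} {u : E}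
    {α : ι} {a : ℝ} (hα : α ∈ s) (hu : ∀ γ ∈ s, ⟪u, v γ⟫ = if α = γ then a else 0) :
    ⟪u, ∑ γ ∈ s, (c γ : ℝ) • v γ⟫ = c α * a := by
  rw [inner_sum, sum_congr rfl fun γ hγ => by rw [inner_smul_right, hu γ hγ, mul_ite, mul_zero],
    sum_ite_eq s α, if_pos hα]

theorem sum_natCast_smul_eq_sum_add_sum {ι M : Type*} [AddCommGroup M] [Module ℝ M]
    {P s : Finset ι} {c : ι → ℕ} (v : ι → M) (hP : P ⊆ {γ ∈ s | c γ ≠ 0}) :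
    ∑ γ ∈ s, (c γ : ℝ) • v γ =
      ∑ γ ∈ P, v γ + ∑ γ ∈ s, ((c γ - if γ ∈ P then 1 else 0 : ℕ) : ℝ) • v γ := by
  have hPs : P ⊆ s := fun γ hγ => (mem_filter.1 (hP hγ)).1
  rw [← inter_eq_right.2 hPs, ← sum_ite_mem, inter_eq_right.2 hPs, ← sum_add_distrib]
  refine sum_congr rfl fun γ _ => ?_
  split_ifs with h
  · rw [Nat.cast_sub (Nat.one_le_iff_ne_zero.2 (mem_filter.1 (hP h)).2)]
    module
  · simp

end

theorem coweight_sub_weyl_coweight_ge_path_general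
    (Φ : Finset E) (hΦ : IsRootSystem (↑Φ : Set E))
    (Δ : Finset E) (hΔΦ : (↑Δ : Set E) ⊆ (↑Φ : Set E))
    (hbase : ∀ β ∈ Φ, β ∈ AddSubmonoid.closure (↑Δ : Set E) ∨
      -β ∈ AddSubmonoid.closure (↑Δ : Set E))
    (cw : E → E) (hcw : ∀ α ∈ Δ, ∀ β ∈ Δ, ⟪cw α, β⟫ = if α = β then 1 else 0)
    (wt : E → E) (hwt : ∀ α ∈ Δ, ∀ β ∈ Δ, ⟪wt α, coroot β⟫ = if α = β then 1 else 0)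
    (δ δ' : E) (hδ : δ ∈ Δ) (hδ' : δ' ∈ Δ)
    (P : Finset E)
    (hPmin : ∀ Q : Finset E, Q ⊆ Δ → δ ∈ Q → δ' ∈ Q → IsConnectedSet (↑Q : Set E) → P ⊆ Q)
    (τ : E ≃ₗᵢ[ℝ] E) (hτ : τ ∈ WeylGroup (↑Φ : Set E))
    (hlt : ⟪τ (cw δ), wt δ'⟫ < ⟪cw δ, wt δ'⟫) :
    ∃ c : E → ℕ, cw δ - τ (cw δ) =
      (∑ ε ∈ P, coroot ε) + ∑ α ∈ Δ, (c α : ℝ) • coroot α := by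
  have hB : IsBase Φ Δ cw := ⟨hΦ, hΔΦ, hbase, hcw⟩
  obtain ⟨l, hl, hlτ⟩ :=
    exists_wordProd_eq_of_mem_reflSubgroup (inv_mem (hB.weylGroup_le_reflSubgroup hτ))
  obtain ⟨c, hc, hconn⟩ := hB.exists_coweight_sub_wordProd_inv_eq hδ l hl
  rw [hlτ, inv_inv] at hc
  have hcδ' : c δ' ≠ 0 := by
    have h := inner_sum_natCast_smul (c := c) hδ' (hwt δ' hδ')
    rw [← hc, inner_sub_right, mul_one, real_inner_comm, real_inner_comm (τ (cw δ))] at h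
    exact_mod_cast (h ▸ sub_pos.2 hlt).ne'
  have hcδ : c δ ≠ 0 := by
    intro h0
    have h := inner_sum_natCast_smul (c := c) hδ fun γ hγ => inner_coweight_coroot hcw hδ hγ
    rw [← hc, h0, Nat.cast_zero, zero_mul, real_inner_comm, inner_sub_map_self] at h
    have hv : ‖cw δ - τ (cw δ)‖ = 0 := pow_eq_zero_iff two_ne_zero |>.1 (by linarith)
    rw [norm_eq_zero, sub_eq_zero] at hv
    exact hlt.ne (by rw [← hv])
  have hsupp : {γ ∈ Δ | c γ ≠ 0} = insert δ {γ ∈ Δ | c γ ≠ 0} :=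
    (insert_eq_of_mem (mem_filter.2 ⟨hδ, hcδ⟩)).symm
  have hP : P ⊆ {γ ∈ Δ | c γ ≠ 0} := hsupp ▸ hPmin _ (insert_subset hδ (filter_subset _ _))
    (mem_insert_self _ _) (mem_insert_of_mem (mem_filter.2 ⟨hδ', hcδ'⟩)) hconn
  exact ⟨_, hc.trans (sum_natCast_smul_eq_sum_add_sum coroot hP)⟩

/-- Let `Φ` be irreducible with base `Δ`, fundamental coweights `cw α = ω̌_α`
and fundamental weights `wt α = ω_α`, and let `δ ≠ δ'` be simple roots with
`[δ, δ'] = P` the (unique) minimal connected subset of `Δ` containing `δ` and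
`δ'` (the path from `δ` to `δ'` in the Dynkin diagram).  If `τ` in the Weyl
group satisfies `(τω̌_δ, ω_{δ'}) < (ω̌_δ, ω_{δ'})`, then
`ω̌_δ - τω̌_δ ≥ Σ_{ε ∈ [δ,δ']} ε̌` in the dominance order, i.e. the difference
is a nonnegative integral combination of the simple coroots. -/
theorem coweight_sub_weyl_coweight_ge_path
    (Φ : Finset E) (hΦ : IsRootSystem (↑Φ : Set E))
    (Δ : Finset E) (hΔΦ : (↑Δ : Set E) ⊆ (↑Φ : Set E))
    (hbase : ∀ β ∈ Φ, β ∈ AddSubmonoid.closure (↑Δ : Set E) ∨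
      -β ∈ AddSubmonoid.closure (↑Δ : Set E))
    (hind : LinearIndependent ℝ (fun x : (Δ : Set E) => (x : E)))
    (hirr : IsConnectedSet (↑Δ : Set E))
    (cw : E → E) (hcw : ∀ α ∈ Δ, ∀ β ∈ Δ, ⟪cw α, β⟫ = if α = β then 1 else 0)
    (wt : E → E) (hwt : ∀ α ∈ Δ, ∀ β ∈ Δ, ⟪wt α, coroot β⟫ = if α = β then 1 else 0)
    (δ δ' : E) (hδ : δ ∈ Δ) (hδ' : δ' ∈ Δ) (hne : δ ≠ δ')
    (P : Finset E) (hPΔ : P ⊆ Δ) (hδP : δ ∈ P) (hδ'P : δ' ∈ P)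
    (hPconn : IsConnectedSet (↑P : Set E))
    (hPmin : ∀ Q : Finset E, Q ⊆ Δ → δ ∈ Q → δ' ∈ Q → IsConnectedSet (↑Q : Set E) → P ⊆ Q)
    (τ : E ≃ₗᵢ[ℝ] E) (hτ : τ ∈ WeylGroup (↑Φ : Set E))
    (hlt : ⟪τ (cw δ), wt δ'⟫ < ⟪cw δ, wt δ'⟫) :
    ∃ c : E → ℕ, cw δ - τ (cw δ) =
      (∑ ε ∈ P, coroot ε) + ∑ α ∈ Δ, (c α : ℝ) • coroot α :=
  coweight_sub_weyl_coweight_ge_path_general Φ hΦ Δ hΔΦ hbase cw hcw wt hwt δ δ' hδ hδ' P hPmin τ hτ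
    hlt
end

section
/- Let Φ be irreducible and α a maximal simple root. If Φ is not simply laced and the highest short root θ_s lies in V(α) (i.e. (ω̌_α, θ_s) = m_α) then V(α) is the disjoint union of the W_{Δ∖{α}}-orbits of θ_s and of the highest root θ; otherwise V(α) = W_{Δ∖{α}}·θ. -/
open scoped RealInnerProductSpace Classical
open Finset

variable {E : Type*} [NormedAddCommGroup E] [InnerProductSpace ℝ E] [FiniteDimensional ℝ E]

/-- The orbit of `x` under the subgroup generated by reflections in `B`. -/
noncomputable def reflOrbit (B : Set E) (x : E) : Set E :=
  {y | ∃ w ∈ reflSubgroup B, y = w x}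

/-!
Let `B = Δ ∖ {α}`. A root `β ∈ V(α)` can be moved inside its `W_B`-orbit to a root `γ` that is
dominant for `B`: take an element of the (finite) orbit maximizing the height `⟪ρ, ·⟫`, where
`⟪ρ, δ⟫ > 0` on `Δ`; reflecting in a `δ ∈ B` with `⟪δ, γ⟫ < 0` would increase the height.
The functional `⟪ω̌_α, ·⟫` is `W_B`-invariant and attains its maximum `m_α` over `Φ` at `γ`,
so `γ` is also `α`-dominant. A dominant root is `θ` or is short, and a dominant short root
other than `θs` would give three distinct root lengths. The two orbits consist of roots of
different lengths, hence are disjoint.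
-/

section RootSystems

variable {F : Type*} [NormedAddCommGroup F] [InnerProductSpace ℝ F]

theorem sref_apply_s13 (a x : F) : sref a x = x - (2 * ⟪a, x⟫ / ⟪a, a⟫) • a := by
  rw [sref, Submodule.reflection_apply, Submodule.starProjection_orthogonal_val,
    Submodule.starProjection_singleton, real_inner_self_eq_norm_sq]
  simp only [RCLike.ofReal_real_eq_id, id_eq]
  module

theorem sref_sref_s13 (a x : F) : sref a (sref a x) = x :=
  Submodule.reflection_reflection _ x

theorem inner_sref_apply (a c x : F) :
    ⟪c, sref a x⟫ = ⟪c, x⟫ - 2 * ⟪a, x⟫ / ⟪a, a⟫ * ⟪c, a⟫ := by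
  rw [sref_apply_s13, inner_sub_right, real_inner_smul_right]

theorem inner_nonneg_of_inner_sref_le {a c x : F} (hca : 0 < ⟪c, a⟫)
    (h : ⟪c, sref a x⟫ ≤ ⟪c, x⟫) : 0 ≤ ⟪a, x⟫ := by
  have ha : 0 < ⟪a, a⟫ := real_inner_self_pos.2 (by rintro rfl; simp at hca)
  rw [inner_sref_apply] at h
  by_contra! hneg
  have : 2 * ⟪a, x⟫ / ⟪a, a⟫ * ⟪c, a⟫ < 0 :=
    mul_neg_of_neg_of_pos (div_neg_of_neg_of_pos (by linarith) ha) hca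
  linarith

theorem IsRootSystem.inner_self_pos {Φ : Set F} (hΦ : IsRootSystem Φ) {x : F} (hx : x ∈ Φ) :
    0 < ⟪x, x⟫ :=
  real_inner_self_pos.2 (ne_of_mem_of_not_mem hx hΦ.zero_not_mem)

theorem IsRootSystem.sref_mem {Φ : Set F} (hΦ : IsRootSystem Φ) {a x : F} (ha : a ∈ Φ)
    (hx : x ∈ Φ) : sref a x ∈ Φ := by
  rw [sref_apply_s13]
  exact hΦ.reflection_mem a ha x hx

theorem IsRootSystem.sref_mem_iff {Φ : Set F} (hΦ : IsRootSystem Φ) {a x : F} (ha : a ∈ Φ) :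
    sref a x ∈ Φ ↔ x ∈ Φ :=
  ⟨fun h => sref_sref_s13 a x ▸ hΦ.sref_mem ha h, hΦ.sref_mem ha⟩

theorem IsRootSystem.apply_mem_iff_of_mem_reflSubgroup {Φ B : Set F} (hΦ : IsRootSystem Φ)
    (hB : B ⊆ Φ) {w : F ≃ₗᵢ[ℝ] F} (hw : w ∈ reflSubgroup B) (x : F) : w x ∈ Φ ↔ x ∈ Φ := by
  induction hw using Subgroup.closure_induction generalizing x with
  | mem _ h => obtain ⟨a, ha, rfl⟩ := h; exact hΦ.sref_mem_iff (hB ha)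
  | one => exact Iff.rfl
  | mul u v _ _ hu hv => exact (hu (v x)).trans (hv x)
  | inv u _ hu => rw [← hu, LinearIsometryEquiv.coe_inv, LinearIsometryEquiv.apply_symm_apply]

theorem apply_eq_self_of_mem_reflSubgroup {B : Set F} {c : F} (hc : ∀ b ∈ B, ⟪b, c⟫ = 0)
    {w : F ≃ₗᵢ[ℝ] F} (hw : w ∈ reflSubgroup B) : w c = c := by
  induction hw using Subgroup.closure_induction with
  | mem _ h =>
    obtain ⟨b, hb, rfl⟩ := h
    exact Submodule.reflection_mem_subspace_eq_self
      (Submodule.mem_orthogonal_singleton_iff_inner_right.2 (hc b hb))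
  | one => rfl
  | mul u v _ _ hu hv => rw [LinearIsometryEquiv.coe_mul, Function.comp_apply, hv, hu]
  | inv u _ hu => rw [LinearIsometryEquiv.coe_inv, LinearIsometryEquiv.symm_apply_eq, hu]

theorem mem_reflOrbit_self (B : Set F) (x : F) : x ∈ reflOrbit B x :=
  ⟨1, one_mem _, rfl⟩

theorem mem_reflOrbit_symm {B : Set F} {x y : F} (h : y ∈ reflOrbit B x) :
    x ∈ reflOrbit B y := by
  obtain ⟨w, hw, rfl⟩ := h
  exact ⟨w⁻¹, inv_mem hw, by simp⟩

theorem sref_mem_reflOrbit {B : Set F} {b x y : F} (hb : b ∈ B) (hy : y ∈ reflOrbit B x) :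
    sref b y ∈ reflOrbit B x := by
  obtain ⟨w, hw, rfl⟩ := hy
  exact ⟨sref b * w, mul_mem (Subgroup.subset_closure ⟨b, hb, rfl⟩) hw, rfl⟩

theorem IsRootSystem.reflOrbit_subset {Φ B : Set F} (hΦ : IsRootSystem Φ) (hB : B ⊆ Φ)
    {x : F} (hx : x ∈ Φ) : reflOrbit B x ⊆ Φ := by
  rintro _ ⟨w, hw, rfl⟩
  exact (hΦ.apply_mem_iff_of_mem_reflSubgroup hB hw x).2 hx

theorem inner_eq_of_mem_reflOrbit {B : Set F} {c x y : F} (hc : ∀ b ∈ B, ⟪b, c⟫ = 0)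
    (hy : y ∈ reflOrbit B x) : ⟪c, y⟫ = ⟪c, x⟫ := by
  obtain ⟨w, hw, rfl⟩ := hy
  conv_lhs => rw [← apply_eq_self_of_mem_reflSubgroup hc hw]
  exact w.inner_map_map c x

theorem disjoint_reflOrbit_of_inner_self_ne {B : Set F} {x y : F} (h : ⟪x, x⟫ ≠ ⟪y, y⟫) :
    Disjoint (reflOrbit B x) (reflOrbit B y) := by
  rw [Set.disjoint_left]
  rintro _ ⟨u, -, rfl⟩ ⟨v, -, hv⟩
  exact h (by rw [← u.inner_map_map, hv, v.inner_map_map])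

theorem IsRootSystem.exists_mem_reflOrbit_dominant {Φ B : Set F} (hΦ : IsRootSystem Φ)
    (hB : B ⊆ Φ) {ρ : F} (hρ : ∀ b ∈ B, 0 < ⟪ρ, b⟫) {x : F} (hx : x ∈ Φ) :
    ∃ y ∈ reflOrbit B x, ∀ b ∈ B, 0 ≤ ⟪b, y⟫ := by
  obtain ⟨y, hy, hmax⟩ := Set.exists_max_image (reflOrbit B x) (⟪ρ, ·⟫)
    (hΦ.finite.subset (hΦ.reflOrbit_subset hB hx)) ⟨x, mem_reflOrbit_self B x⟩
  exact ⟨y, hy, fun b hb =>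
    inner_nonneg_of_inner_sref_le (hρ b hb) (hmax _ (sref_mem_reflOrbit hb hy))⟩

theorem inner_nonneg_of_mem_closure {S : Set F} {c x : F} (hc : ∀ s ∈ S, 0 ≤ ⟪c, s⟫)
    (hx : x ∈ AddSubmonoid.closure S) : 0 ≤ ⟪c, x⟫ := by
  induction hx using AddSubmonoid.closure_induction with
  | mem s hs => exact hc s hs
  | zero => simp
  | add x y _ _ hx hy => rw [inner_add_right]; exact add_nonneg hx hy

theorem inner_nonneg_of_sub_sref_mem_closure {S : Set F} {ρ δ x : F}
    (hρ : ∀ s ∈ S, 0 < ⟪ρ, s⟫) (hδ : δ ∈ S) (h : x - sref δ x ∈ AddSubmonoid.closure S) :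
    0 ≤ ⟪δ, x⟫ := by
  have := inner_nonneg_of_mem_closure (fun s hs => (hρ s hs).le) h
  rw [inner_sub_right] at this
  exact inner_nonneg_of_inner_sref_le (hρ δ hδ) (by linarith)

theorem inner_self_lt_of_dominant {S : Set F} {x y : F} (hx : ∀ s ∈ S, 0 ≤ ⟪s, x⟫)
    (hxy : y - x ∈ AddSubmonoid.closure S) (hne : x ≠ y) :
    ⟪x, x⟫ < ⟪y, y⟫ ∧ ⟪x, x⟫ ≤ ⟪x, y⟫ := by
  have hcross : 0 ≤ ⟪x, y - x⟫ :=
    inner_nonneg_of_mem_closure (fun s hs => real_inner_comm s x ▸ hx s hs) hxy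
  have hdiff : 0 < ⟪y - x, y - x⟫ := real_inner_self_pos.2 (sub_ne_zero.2 hne.symm)
  have hyy : ⟪y, y⟫ = ⟪x, x⟫ + 2 * ⟪x, y - x⟫ + ⟪y - x, y - x⟫ := by
    rw [← real_inner_add_add_self, add_sub_cancel]
  rw [inner_sub_right] at hcross hyy
  constructor <;> linarith

theorem IsRootSystem.inner_self_mem_Icc {Φ : Set F} (hΦ : IsRootSystem Φ) {x y : F}
    (hx : x ∈ Φ) (hy : y ∈ Φ) (hlt : ⟪x, x⟫ < ⟪y, y⟫) (hxy : 0 < ⟪x, y⟫) :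
    ⟪y, y⟫ ∈ Set.Icc (2 * ⟪x, x⟫) (3 * ⟪x, x⟫) := by
  have hxx := hΦ.inner_self_pos hx
  have hyy := hΦ.inner_self_pos hy
  obtain ⟨p, hp⟩ := hΦ.crystallographic x hx y hy
  obtain ⟨q, hq⟩ := hΦ.crystallographic y hy x hx
  rw [div_eq_iff hxx.ne'] at hp
  rw [div_eq_iff hyy.ne', real_inner_comm] at hq
  have hCS : ⟪x, y⟫ * ⟪x, y⟫ ≤ ⟪x, x⟫ * ⟪y, y⟫ := real_inner_mul_inner_self_le x y
  -- Cauchy–Schwarz gives `p * q ≤ 4`, and `0 < q < p` as `x` is the shorter root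
  have hq1 : q = 1 := by
    have hpq : (p : ℝ) * q * (⟪x, x⟫ * ⟪y, y⟫) ≤ 4 * (⟪x, x⟫ * ⟪y, y⟫) := by nlinarith
    have hpq : p * q ≤ 4 := by exact_mod_cast le_of_mul_le_mul_right hpq (mul_pos hxx hyy)
    have hq0 : 0 < q := by exact_mod_cast (show (0 : ℝ) < q by nlinarith)
    have hqp : q < p := by exact_mod_cast (show (q : ℝ) < p by nlinarith)
    nlinarith
  subst hq1
  have hyp : ⟪y, y⟫ = p * ⟪x, x⟫ := by push_cast at hq; linarith
  have hp1 : (1 : ℤ) < p := by exact_mod_cast (show (1 : ℝ) < p by nlinarith)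
  have hp3 : p ≤ 3 := by
    by_contra! hp4
    have hp4 : (4 : ℝ) ≤ p := by exact_mod_cast hp4
    -- `p ≥ 4` forces `y = 2 • x`, which is excluded since `Φ` is reduced
    have hzero : ⟪y - (2 : ℝ) • x, y - (2 : ℝ) • x⟫ ≤ 0 := by
      rw [real_inner_sub_sub_self, real_inner_smul_right, real_inner_smul_left,
        real_inner_smul_right, real_inner_comm x y]
      push_cast at hq
      nlinarith
    rw [real_inner_self_nonpos, sub_eq_zero] at hzero
    rcases hΦ.reduced x hx 2 (hzero ▸ hy) with h | h <;> norm_num at h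
  have hp2 : (2 : ℝ) ≤ p := by exact_mod_cast (show (2 : ℤ) ≤ p by omega)
  have hp3 : (p : ℝ) ≤ 3 := by exact_mod_cast hp3
  constructor <;> nlinarith

theorem IsRootSystem.inner_self_mem_Icc_of_dominant {Φ S : Set F} (hΦ : IsRootSystem Φ)
    {x y : F} (hx : x ∈ Φ) (hy : y ∈ Φ) (hdom : ∀ s ∈ S, 0 ≤ ⟪s, x⟫)
    (hxy : y - x ∈ AddSubmonoid.closure S) (hne : x ≠ y) :
    ⟪y, y⟫ ∈ Set.Icc (2 * ⟪x, x⟫) (3 * ⟪x, x⟫) := by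
  obtain ⟨hlt, hle⟩ := inner_self_lt_of_dominant hdom hxy hne
  exact hΦ.inner_self_mem_Icc hx hy hlt ((hΦ.inner_self_pos hx).trans_le hle)

theorem IsRootSystem.dominant_eq_or_eq {Φ Δ : Set F} (hΦ : IsRootSystem Φ) (hΔ : Δ ⊆ Φ)
    {ρ : F} (hρ : ∀ δ ∈ Δ, 0 < ⟪ρ, δ⟫) {θ θs γ : F} (hθ : θ ∈ Φ)
    (hhigh : ∀ β ∈ Φ, θ - β ∈ AddSubmonoid.closure Δ)
    (hθs : {β ∈ Φ | ⟪β, β⟫ ≠ ⟪θ, θ⟫}.Nonempty → θs ∈ {β ∈ Φ | ⟪β, β⟫ ≠ ⟪θ, θ⟫} ∧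
      ∀ β ∈ {β ∈ Φ | ⟪β, β⟫ ≠ ⟪θ, θ⟫}, θs - β ∈ AddSubmonoid.closure Δ)
    (hγ : γ ∈ Φ) (hdom : ∀ δ ∈ Δ, 0 ≤ ⟪δ, γ⟫) :
    γ = θ ∨ ({β ∈ Φ | ⟪β, β⟫ ≠ ⟪θ, θ⟫}.Nonempty ∧ γ = θs) := by
  rcases eq_or_ne γ θ with rfl | hγθ
  · exact Or.inl rfl
  have hγshort : γ ∈ {β ∈ Φ | ⟪β, β⟫ ≠ ⟪θ, θ⟫} :=
    ⟨hγ, (inner_self_lt_of_dominant hdom (hhigh γ hγ) hγθ).1.ne⟩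
  obtain ⟨⟨hθsΦ, hθsθ⟩, hθshigh⟩ := hθs ⟨γ, hγshort⟩
  refine Or.inr ⟨⟨γ, hγshort⟩, ?_⟩
  by_contra hγθs
  have hθsdom : ∀ δ ∈ Δ, 0 ≤ ⟪δ, θs⟫ := fun δ hδ =>
    inner_nonneg_of_sub_sref_mem_closure hρ hδ
      (hθshigh _ ⟨hΦ.sref_mem (hΔ hδ) hθsΦ, by rwa [LinearIsometryEquiv.inner_map_map]⟩)
  -- `⟪θ, θ⟫ ≥ 2 ⟪θs, θs⟫ ≥ 4 ⟪γ, γ⟫`, against `⟪θ, θ⟫ ≤ 3 ⟪γ, γ⟫`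
  have h₁ := hΦ.inner_self_mem_Icc_of_dominant hγ hθsΦ hdom (hθshigh γ hγshort) hγθs
  have h₂ := hΦ.inner_self_mem_Icc_of_dominant hθsΦ hθ hθsdom (hhigh θs hθsΦ)
    (fun h => hθsθ (h ▸ rfl))
  have h₃ := hΦ.inner_self_mem_Icc_of_dominant hγ hθ hdom (hhigh γ hγ) hγθ
  linarith [h₁.1, h₂.1, h₃.2, hΦ.inner_self_pos hγ]

theorem IsRootSystem.mem_reflOrbit_of_inner_le {Φ Δ : Set F} (hΦ : IsRootSystem Φ)
    (hΔ : Δ ⊆ Φ) {ρ : F} (hρ : ∀ δ ∈ Δ, 0 < ⟪ρ, δ⟫) {θ θs : F} (hθ : θ ∈ Φ)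
    (hhigh : ∀ β ∈ Φ, θ - β ∈ AddSubmonoid.closure Δ)
    (hθs : {β ∈ Φ | ⟪β, β⟫ ≠ ⟪θ, θ⟫}.Nonempty → θs ∈ {β ∈ Φ | ⟪β, β⟫ ≠ ⟪θ, θ⟫} ∧
      ∀ β ∈ {β ∈ Φ | ⟪β, β⟫ ≠ ⟪θ, θ⟫}, θs - β ∈ AddSubmonoid.closure Δ)
    {α c β : F} (hcα : 0 < ⟪c, α⟫) (hc : ∀ b ∈ Δ \ {α}, ⟪b, c⟫ = 0)
    (hβ : β ∈ Φ) (hmax : ∀ x ∈ Φ, ⟪c, x⟫ ≤ ⟪c, β⟫) :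
    β ∈ reflOrbit (Δ \ {α}) θ ∨
      ({β ∈ Φ | ⟪β, β⟫ ≠ ⟪θ, θ⟫}.Nonempty ∧ β ∈ reflOrbit (Δ \ {α}) θs) := by
  have hB : Δ \ {α} ⊆ Φ := Set.sdiff_subset.trans hΔ
  obtain ⟨γ, hβγ, hγdom⟩ :=
    hΦ.exists_mem_reflOrbit_dominant hB (fun b hb => hρ b hb.1) hβ
  have hγ : γ ∈ Φ := hΦ.reflOrbit_subset hB hβ hβγ
  have hdom : ∀ δ ∈ Δ, 0 ≤ ⟪δ, γ⟫ := by
    intro δ hδ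
    rcases eq_or_ne δ α with rfl | hδα
    · rw [← inner_eq_of_mem_reflOrbit hc hβγ] at hmax
      exact inner_nonneg_of_inner_sref_le hcα (hmax _ (hΦ.sref_mem (hΔ hδ) hγ))
    · exact hγdom δ ⟨hδ, hδα⟩
  rcases hΦ.dominant_eq_or_eq hΔ hρ hθ hhigh hθs hγ hdom with rfl | ⟨hne, rfl⟩
  · exact Or.inl (mem_reflOrbit_symm hβγ)
  · exact Or.inr ⟨hne, mem_reflOrbit_symm hβγ⟩

theorem inner_sum_smul_of_dual {Δ : Finset F} {cw : F → F}
    (hcw : ∀ α ∈ Δ, ∀ β ∈ Δ, ⟪cw α, β⟫ = if α = β then 1 else 0) {δ : F} (hδ : δ ∈ Δ)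
    (g : F → ℝ) : ⟪cw δ, ∑ e ∈ Δ, g e • e⟫ = g δ := by
  simp_rw [inner_sum, real_inner_smul_right]
  rw [Finset.sum_congr rfl fun e he => by rw [hcw δ hδ e he]]
  simp [hδ]

theorem sum_inner_of_dual {Δ : Finset F} {cw : F → F}
    (hcw : ∀ α ∈ Δ, ∀ β ∈ Δ, ⟪cw α, β⟫ = if α = β then 1 else 0) {δ : F} (hδ : δ ∈ Δ) :
    ⟪∑ e ∈ Δ, cw e, δ⟫ = 1 := by
  rw [sum_inner, Finset.sum_congr rfl fun e he => hcw e he δ hδ]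
  simp [hδ]

end RootSystems

theorem facet_orbit_decomposition_general
    (Φ : Finset E) (hΦ : IsRootSystem (↑Φ : Set E))
    (Δ : Finset E) (hΔΦ : (↑Δ : Set E) ⊆ (↑Φ : Set E))
    (θ : E) (hθ : θ ∈ Φ) (hhigh : ∀ β ∈ Φ, θ - β ∈ AddSubmonoid.closure (↑Δ : Set E))
    (m : E → ℕ) (hm : θ = ∑ α ∈ Δ, (m α : ℝ) • α)
    (cw : E → E) (hcw : ∀ α ∈ Δ, ∀ β ∈ Δ, ⟪cw α, β⟫ = if α = β then 1 else 0)
    (α : E) (hα : α ∈ Δ)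
    (Φs : Set E) (hΦs : Φs = {β ∈ (↑Φ : Set E) | ⟪β, β⟫ ≠ ⟪θ, θ⟫})
    (θs : E) (hθs : Φs.Nonempty → θs ∈ Φs ∧
      ∀ β ∈ Φs, θs - β ∈ AddSubmonoid.closure (↑Δ : Set E))
    (V : Set E) (hV : V = {β ∈ (↑Φ : Set E) | ⟪cw α, β⟫ = (m α : ℝ)}) :
    (Φs.Nonempty ∧ ⟪cw α, θs⟫ = (m α : ℝ) →
      V = reflOrbit ((↑Δ : Set E) \ {α}) θ ∪ reflOrbit ((↑Δ : Set E) \ {α}) θs ∧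
        Disjoint (reflOrbit ((↑Δ : Set E) \ {α}) θ) (reflOrbit ((↑Δ : Set E) \ {α}) θs)) ∧
    (¬ (Φs.Nonempty ∧ ⟪cw α, θs⟫ = (m α : ℝ)) →
      V = reflOrbit ((↑Δ : Set E) \ {α}) θ) := by
  subst hΦs hV
  have hρ : ∀ δ ∈ (↑Δ : Set E), 0 < ⟪∑ e ∈ Δ, cw e, δ⟫ := fun δ hδ => by
    rw [sum_inner_of_dual hcw hδ]; exact one_pos
  have hcB : ∀ b ∈ (↑Δ : Set E) \ {α}, ⟪b, cw α⟫ = 0 := fun b hb => by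
    rw [real_inner_comm, hcw α hα b hb.1, if_neg (Ne.symm hb.2)]
  have hθc : ⟪cw α, θ⟫ = m α := by rw [hm, inner_sum_smul_of_dual hcw hα]
  have hmax : ∀ x ∈ (↑Φ : Set E), ⟪cw α, x⟫ ≤ ⟪cw α, θ⟫ := fun x hx => by
    have := inner_nonneg_of_mem_closure (c := cw α)
      (fun s hs => by rw [hcw α hα s hs]; split_ifs <;> norm_num) (hhigh x hx)
    rwa [inner_sub_right, sub_nonneg] at this
  have hfacet : ∀ x ∈ (↑Φ : Set E), ⟪cw α, x⟫ = m α →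
      reflOrbit ((↑Δ : Set E) \ {α}) x ⊆ {β ∈ (↑Φ : Set E) | ⟪cw α, β⟫ = m α} :=
    fun x hx hxc y hy => ⟨hΦ.reflOrbit_subset (Set.sdiff_subset.trans hΔΦ) hx hy,
      (inner_eq_of_mem_reflOrbit hcB hy).trans hxc⟩
  have hcover : ∀ β ∈ {β ∈ (↑Φ : Set E) | ⟪cw α, β⟫ = m α}, β ∈ reflOrbit _ θ ∨
      ({β ∈ (↑Φ : Set E) | ⟪β, β⟫ ≠ ⟪θ, θ⟫}.Nonempty ∧ β ∈ reflOrbit _ θs) :=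
    fun β hβ => hΦ.mem_reflOrbit_of_inner_le hΔΦ hρ hθ hhigh hθs
      (by rw [hcw α hα α hα, if_pos rfl]; exact one_pos) hcB hβ.1 (hβ.2 ▸ hθc ▸ hmax)
  refine ⟨fun ⟨hne, hθsc⟩ => ⟨?_, disjoint_reflOrbit_of_inner_self_ne (hθs hne).1.2.symm⟩,
    fun hnot => ?_⟩
  · exact subset_antisymm (fun β hβ => (hcover β hβ).imp_right And.right)
      (Set.union_subset (hfacet θ hθ hθc) (hfacet θs (hθs hne).1.1 hθsc))
  · refine subset_antisymm (fun β hβ => (hcover β hβ).resolve_right ?_) (hfacet θ hθ hθc)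
    exact fun ⟨hne, hβθs⟩ => hnot ⟨hne, (inner_eq_of_mem_reflOrbit hcB hβθs).symm.trans hβ.2⟩

/-- Let `Φ` be irreducible with base `Δ`, highest (long) root `θ = Σ m_α α`,
fundamental coweights `cw α = ω̌_α`, and let `α` be a maximal simple root.  Let
`Φs` be the set of short roots (those `β` with `(β,β) ≠ (θ,θ)`; empty exactly
when `Φ` is simply laced), `θs` the highest short root whenever `Φs ≠ ∅`, and
`V(α) = {β ∈ Φ | (ω̌_α, β) = m_α}` the set of roots in the coordinate facet
`F(α)`.  If `Φ` is not simply laced and `θs ∈ V(α)` then `V(α)` is the disjoint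
union of the `W_{Δ∖{α}}`-orbits of `θ` and of `θs`; otherwise
`V(α) = W_{Δ∖{α}}·θ`. -/
theorem facet_orbit_decomposition
    (Φ : Finset E) (hΦ : IsRootSystem (↑Φ : Set E))
    (Δ : Finset E) (hΔΦ : (↑Δ : Set E) ⊆ (↑Φ : Set E))
    (hbase : ∀ β ∈ Φ, β ∈ AddSubmonoid.closure (↑Δ : Set E) ∨
      -β ∈ AddSubmonoid.closure (↑Δ : Set E))
    (hind : LinearIndependent ℝ (fun x : (Δ : Set E) => (x : E)))
    (hirr : IsConnectedSet (↑Δ : Set E))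
    (θ : E) (hθ : θ ∈ Φ) (hhigh : ∀ β ∈ Φ, θ - β ∈ AddSubmonoid.closure (↑Δ : Set E))
    (m : E → ℕ) (hm : θ = ∑ α ∈ Δ, (m α : ℝ) • α)
    (cw : E → E) (hcw : ∀ α ∈ Δ, ∀ β ∈ Δ, ⟪cw α, β⟫ = if α = β then 1 else 0)
    (α : E) (hα : α ∈ Δ)
    (hαmax : IsConnectedSet (((↑Δ : Set E) \ {α}) ∪ {-θ}))
    (Φs : Set E) (hΦs : Φs = {β ∈ (↑Φ : Set E) | ⟪β, β⟫ ≠ ⟪θ, θ⟫})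
    (θs : E) (hθs : Φs.Nonempty → θs ∈ Φs ∧
      ∀ β ∈ Φs, θs - β ∈ AddSubmonoid.closure (↑Δ : Set E))
    (V : Set E) (hV : V = {β ∈ (↑Φ : Set E) | ⟪cw α, β⟫ = (m α : ℝ)}) :
    (Φs.Nonempty ∧ ⟪cw α, θs⟫ = (m α : ℝ) →
      V = reflOrbit ((↑Δ : Set E) \ {α}) θ ∪ reflOrbit ((↑Δ : Set E) \ {α}) θs ∧
        Disjoint (reflOrbit ((↑Δ : Set E) \ {α}) θ) (reflOrbit ((↑Δ : Set E) \ {α}) θs)) ∧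
    (¬ (Φs.Nonempty ∧ ⟪cw α, θs⟫ = (m α : ℝ)) →
      V = reflOrbit ((↑Δ : Set E) \ {α}) θ) :=
  facet_orbit_decomposition_general Φ hΦ Δ hΔΦ θ hθ hhigh m hm cw hcw α hα Φs hΦs θs hθs V hV
end

section
/- Let Φ be irreducible, A ∈ 𝓘, and β_A the unique root with (ω̌_α, β_A) = m_α for α ∈ A and minimal in the dominance order among roots in V(A). Then the lattice generated by the roots in the standard parabolic face F(A) is Z(V(A)) = ⟨Δ∖A, β_A⟩_ℤ. -/
open scoped RealInnerProductSpace Classical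
open Finset

variable {E : Type*} [NormedAddCommGroup E] [InnerProductSpace ℝ E] [FiniteDimensional ℝ E]

/-!
Every `β ∈ V` is `β_A` plus a nonnegative combination of simple roots, and pairing with the
coweights `ω̌_α`, `α ∈ A`, shows that only simple roots of `Δ ∖ A` occur; this gives
`⟨V⟩ ⊆ ⟨Δ ∖ A, β_A⟩`. Conversely `θ ∈ V`, so `-θ ∈ ⟨V⟩`. If a simple root `γ ∉ A` is not
orthogonal to some `β ∈ V`, then `β = ±γ` or one of `β ± γ` is a root, which then lies in `V`
since `ω̌_α` vanishes on `γ`; either way `γ ∈ ⟨V⟩`. Because `(Δ ∖ A) ∪ {-θ}` is connected, this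
spreads from `-θ` to all of `Δ ∖ A`.
-/

section RootSystem

variable {E : Type*} [NormedAddCommGroup E] [InnerProductSpace ℝ E] {Φ : Set E}

namespace IsRootSystem

lemma ne_zero (hΦ : IsRootSystem Φ) {α : E} (hα : α ∈ Φ) : α ≠ 0 :=
  fun h => hΦ.zero_not_mem (h ▸ hα)

lemma neg_mem (hΦ : IsRootSystem Φ) {α : E} (hα : α ∈ Φ) : -α ∈ Φ := by
  have h := hΦ.reflection_mem α hα α hα
  rw [mul_div_cancel_right₀ _ (inner_self_ne_zero.2 (hΦ.ne_zero hα))] at h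
  convert h using 1
  module

lemma inner_mul_inner_lt (hΦ : IsRootSystem Φ) {α β : E} (hα : α ∈ Φ) (hβ : β ∈ Φ)
    (hβα : β ≠ α) (hβnα : β ≠ -α) : ⟪α, β⟫ * ⟪α, β⟫ < ⟪α, α⟫ * ⟪β, β⟫ := by
  refine lt_of_le_of_ne (real_inner_mul_inner_self_le α β) fun h => ?_
  have hnorm : ‖⟪α, β⟫‖ = ‖α‖ * ‖β‖ := by
    rw [← sq_eq_sq₀ (norm_nonneg _) (by positivity), Real.norm_eq_abs, sq_abs, mul_pow,
      ← real_inner_self_eq_norm_sq, ← real_inner_self_eq_norm_sq, sq, h]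
  obtain ⟨r, -, rfl⟩ := (norm_inner_eq_norm_iff (hΦ.ne_zero hα) (hΦ.ne_zero hβ)).1 hnorm
  rcases hΦ.reduced α hα r hβ with rfl | rfl
  · exact hβα (one_smul ℝ α)
  · exact hβnα (by rw [neg_one_smul])

lemma add_mem_of_inner_neg (hΦ : IsRootSystem Φ) {α β : E} (hα : α ∈ Φ) (hβ : β ∈ Φ)
    (hneg : ⟪α, β⟫ < 0) (hβnα : β ≠ -α) : α + β ∈ Φ := by
  have hβα : β ≠ α := by
    rintro rfl
    exact (real_inner_self_nonneg).not_gt hneg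
  have hαα : 0 < ⟪α, α⟫ := real_inner_self_pos.2 (hΦ.ne_zero hα)
  have hββ : 0 < ⟪β, β⟫ := real_inner_self_pos.2 (hΦ.ne_zero hβ)
  obtain ⟨n, hn⟩ := hΦ.crystallographic α hα β hβ
  obtain ⟨k, hk⟩ := hΦ.crystallographic β hβ α hα
  have hn' : 2 * ⟪α, β⟫ = n * ⟪α, α⟫ := by field_simp at hn; linarith
  have hk' : 2 * ⟪α, β⟫ = k * ⟪β, β⟫ := by rw [real_inner_comm] at hk; field_simp at hk; linarith
  have hcs := hΦ.inner_mul_inner_lt hα hβ hβα hβnα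
  -- the Cartan integers are negative with product `4 cos² < 4`, so one of them is `-1`
  have hn0 : n < 0 := by exact_mod_cast (show (n : ℝ) < 0 by nlinarith)
  have hk0 : k < 0 := by exact_mod_cast (show (k : ℝ) < 0 by nlinarith)
  have hnk : n * k < 4 := by exact_mod_cast (show (n : ℝ) * k < 4 by nlinarith)
  have : n = -1 ∨ k = -1 := by
    by_contra! h
    nlinarith [show n ≤ -2 by omega, show k ≤ -2 by omega]
  rcases this with rfl | rfl
  · convert hΦ.reflection_mem α hα β hβ using 1
    rw [hn]
    push_cast
    module
  · convert hΦ.reflection_mem β hβ α hα using 1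
    rw [hk]
    push_cast
    module

lemma mem_closure_of_inner_neg (hΦ : IsRootSystem Φ) {S : Set E} {β γ : E} (hγ : γ ∈ Φ)
    (hβS : β ∈ S) (hβ : β ∈ Φ) (hadd : β + γ ∈ Φ → β + γ ∈ S) (hneg : ⟪γ, β⟫ < 0) :
    γ ∈ AddSubgroup.closure S := by
  by_cases hβγ : β = -γ
  · rw [← neg_neg γ, ← hβγ]
    exact AddSubgroup.neg_mem _ (AddSubgroup.subset_closure hβS)
  · have hsum : β + γ ∈ S := hadd (add_comm γ β ▸ hΦ.add_mem_of_inner_neg hγ hβ hneg hβγ)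
    rw [← add_sub_cancel_left β γ]
    exact sub_mem (AddSubgroup.subset_closure hsum) (AddSubgroup.subset_closure hβS)

lemma mem_closure_of_inner_ne_zero (hΦ : IsRootSystem Φ) {S : Set E} {β γ : E} (hγ : γ ∈ Φ)
    (hβS : β ∈ S) (hβ : β ∈ Φ) (hadd : β + γ ∈ Φ → β + γ ∈ S)
    (hsub : β - γ ∈ Φ → β - γ ∈ S) (hne : ⟪γ, β⟫ ≠ 0) : γ ∈ AddSubgroup.closure S := by
  rcases hne.lt_or_gt with hlt | hgt
  · exact hΦ.mem_closure_of_inner_neg hγ hβS hβ hadd hlt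
  · rw [← neg_mem_iff]
    refine hΦ.mem_closure_of_inner_neg (hΦ.neg_mem hγ) hβS hβ ?_
      (by rwa [inner_neg_left, neg_lt_zero])
    simpa only [← sub_eq_add_neg] using hsub

end IsRootSystem

lemma IsConnectedSet.forall_of_adj {S : Set E} (hS : IsConnectedSet S) {P : E → Prop} {x₀ : E}
    (hx₀ : x₀ ∈ S) (h₀ : P x₀) (hstep : ∀ a ∈ S, ∀ b ∈ S, ⟪a, b⟫ ≠ 0 → P a → P b) :
    ∀ y ∈ S, P y := by
  intro y hy
  induction hS x₀ hx₀ y hy with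
  | refl => exact h₀
  | tail _ hab ih => exact hstep _ hab.1 _ hab.2.1 hab.2.2 (ih hab.1)

lemma exists_inner_ne_zero_of_mem_closure {V : Set E} {x z : E}
    (hz : z ∈ AddSubgroup.closure V) (hxz : ⟪x, z⟫ ≠ 0) : ∃ β ∈ V, ⟪x, β⟫ ≠ 0 := by
  contrapose! hxz
  induction hz using AddSubgroup.closure_induction with
  | mem β hβ => exact hxz β hβ
  | zero => exact inner_zero_right x
  | add a b _ _ ha hb => rw [inner_add_right, ha, hb, add_zero]
  | neg a _ ha => rw [inner_neg_right, ha, neg_zero]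

lemma IsConnectedSet.subset_addSubgroupClosure {S V : Set E} (hS : IsConnectedSet S) {x₀ : E}
    (hx₀ : x₀ ∈ S) (h₀ : x₀ ∈ AddSubgroup.closure V)
    (hstep : ∀ b ∈ S, ∀ β ∈ V, ⟪b, β⟫ ≠ 0 → b ∈ AddSubgroup.closure V) :
    S ⊆ AddSubgroup.closure V := by
  refine hS.forall_of_adj hx₀ h₀ fun a _ b hb hab ha => ?_
  obtain ⟨β, hβ, hne⟩ := exists_inner_ne_zero_of_mem_closure ha (by rwa [real_inner_comm])
  exact hstep b hb β hβ hne

section Coweights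

variable {Δ : Finset E} {cw : E → E}

lemma inner_coweight_sum_smul (hcw : ∀ α ∈ Δ, ∀ β ∈ Δ, ⟪cw α, β⟫ = if α = β then 1 else 0)
    {α : E} (hα : α ∈ Δ) (c : E → ℝ) : ⟪cw α, ∑ b ∈ Δ, c b • b⟫ = c α := by
  simp only [inner_sum, real_inner_smul_right]
  rw [Finset.sum_eq_single α (fun b hb hbα => by simp [hcw α hα b hb, Ne.symm hbα])
    (fun h => absurd hα h), hcw α hα α hα, if_pos rfl, mul_one]

lemma mem_closure_sdiff_of_inner_coweight_eq_zero
    (hcw : ∀ α ∈ Δ, ∀ β ∈ Δ, ⟪cw α, β⟫ = if α = β then 1 else 0) {A : Set E} {v : E}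
    (hv : v ∈ AddSubmonoid.closure (Δ : Set E)) (hA : ∀ α ∈ A, ⟪cw α, v⟫ = 0) :
    v ∈ AddSubmonoid.closure ((Δ : Set E) \ A) := by
  obtain ⟨f, -, rfl⟩ := AddSubmonoid.mem_closure_finset.1 hv
  refine AddSubmonoid.sum_mem _ fun b hb => ?_
  by_cases hbA : b ∈ A
  · have hfb := hA b hbA
    simp only [← Nat.cast_smul_eq_nsmul ℝ, inner_coweight_sum_smul hcw hb] at hfb
    simp [Nat.cast_eq_zero.1 hfb]
  · exact nsmul_mem (AddSubmonoid.subset_closure ((Set.mem_sdiff b).2 ⟨hb, hbA⟩)) _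

end Coweights

end RootSystem

lemma closure_le_closure_union_singleton {G : Type*} [AddCommGroup G] {V T : Set G} {b : G}
    (h : ∀ β ∈ V, β - b ∈ AddSubmonoid.closure T) :
    AddSubgroup.closure V ≤ AddSubgroup.closure (T ∪ {b}) := by
  refine (AddSubgroup.closure_le _).2 fun β hβ => ?_
  rw [← add_sub_cancel b β]
  refine add_mem (AddSubgroup.subset_closure (Or.inr rfl)) ?_
  exact AddSubmonoid.closure_le.2 (fun γ hγ => AddSubgroup.subset_closure (Or.inl hγ)) (h β hβ)

theorem face_lattice_eq_general
    (Φ : Finset E) (hΦ : IsRootSystem (↑Φ : Set E))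
    (Δ : Finset E) (hΔΦ : (↑Δ : Set E) ⊆ (↑Φ : Set E))
    (θ : E) (hθ : θ ∈ Φ)
    (m : E → ℕ) (hm : θ = ∑ α ∈ Δ, (m α : ℝ) • α)
    (cw : E → E) (hcw : ∀ α ∈ Δ, ∀ β ∈ Δ, ⟪cw α, β⟫ = if α = β then 1 else 0)
    (A : Set E) (hAΔ : A ⊆ (↑Δ : Set E))
    (hAI : IsConnectedSet (((↑Δ : Set E) \ A) ∪ {-θ}))
    (V : Set E) (hV : V = {β ∈ (↑Φ : Set E) | ∀ α ∈ A, ⟪cw α, β⟫ = (m α : ℝ)})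
    (βA : E) (hβA : βA ∈ V)
    (hdom : ∀ β ∈ (↑Φ : Set E), β ∈ V ↔ β - βA ∈ AddSubmonoid.closure (↑Δ : Set E)) :
    AddSubgroup.closure V = AddSubgroup.closure (((↑Δ : Set E) \ A) ∪ {βA}) := by
  have hcw_sdiff : ∀ α ∈ A, ∀ γ ∈ (↑Δ : Set E) \ A, ⟪cw α, γ⟫ = 0 := fun α hα γ hγ => by
    rw [hcw α (hAΔ hα) γ hγ.1, if_neg (ne_of_mem_of_not_mem hα hγ.2)]
  have hV_of_inner_eq {β δ : E} (hβ : β ∈ V) (hδ : δ ∈ Φ)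
      (h : ∀ α ∈ A, ⟪cw α, δ⟫ = ⟪cw α, β⟫) : δ ∈ V := by
    subst hV
    exact ⟨hδ, fun α hα => (h α hα).trans (hβ.2 α hα)⟩
  have hθV : θ ∈ V := by
    subst hV
    exact ⟨hθ, fun α hα => by rw [hm, inner_coweight_sum_smul hcw (hAΔ hα)]⟩
  have hVΦ : V ⊆ Φ := by subst hV; exact fun β hβ => hβ.1
  have hsimple : ∀ γ ∈ (↑Δ : Set E) \ A, ∀ β ∈ V, ⟪γ, β⟫ ≠ 0 → γ ∈ AddSubgroup.closure V :=
    fun γ hγ β hβ hne => hΦ.mem_closure_of_inner_ne_zero (hΔΦ hγ.1) hβ (hVΦ hβ)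
      (fun h => hV_of_inner_eq hβ h fun α hα => by
        rw [inner_add_right, hcw_sdiff α hα γ hγ, add_zero])
      (fun h => hV_of_inner_eq hβ h fun α hα => by
        rw [inner_sub_right, hcw_sdiff α hα γ hγ, sub_zero])
      hne
  have hgen : ((↑Δ : Set E) \ A) ∪ {-θ} ⊆ AddSubgroup.closure V := by
    have hnegθ : -θ ∈ AddSubgroup.closure V := neg_mem (AddSubgroup.subset_closure hθV)
    refine hAI.subset_addSubgroupClosure (Or.inr rfl) hnegθ ?_
    rintro b (hb | rfl) β hβ hne
    exacts [hsimple b hb β hβ hne, hnegθ]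
  have hdiff : ∀ β ∈ V, β - βA ∈ AddSubmonoid.closure ((↑Δ : Set E) \ A) := fun β hβ =>
    mem_closure_sdiff_of_inner_coweight_eq_zero hcw ((hdom β (hVΦ hβ)).1 hβ) fun α hα => by
      subst hV
      rw [inner_sub_right, hβ.2 α hα, hβA.2 α hα, sub_self]
  refine le_antisymm (closure_le_closure_union_singleton hdiff) ((AddSubgroup.closure_le _).2 ?_)
  exact Set.union_subset (Set.subset_union_left.trans hgen)
    (Set.singleton_subset_iff.2 (AddSubgroup.subset_closure hβA))

/-- Let `Φ` be irreducible with base `Δ`, highest root `θ = Σ m_α α` and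
fundamental coweights `cw α = ω̌_α`, and let `A ∈ 𝓘` (i.e. `(Δ∖A) ∪ {α₀}` is
connected, the affine node `α₀` being `-θ`).  Let
`V(A) = {β ∈ Φ | (ω̌_α, β) = m_α for all α ∈ A}` be the set of roots in the
standard parabolic face `F(A)` and let `β_A` be the root such that `V(A)` is
exactly the set of roots `β` with `β ≥ β_A` in the dominance order.  Then the
lattice generated by `V(A)` is `Z(V(A)) = ⟨Δ∖A, β_A⟩_ℤ`. -/
theorem face_lattice_eq
    (Φ : Finset E) (hΦ : IsRootSystem (↑Φ : Set E))
    (Δ : Finset E) (hΔΦ : (↑Δ : Set E) ⊆ (↑Φ : Set E))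
    (hbase : ∀ β ∈ Φ, β ∈ AddSubmonoid.closure (↑Δ : Set E) ∨
      -β ∈ AddSubmonoid.closure (↑Δ : Set E))
    (hind : LinearIndependent ℝ (fun x : (Δ : Set E) => (x : E)))
    (hirr : IsConnectedSet (↑Δ : Set E))
    (θ : E) (hθ : θ ∈ Φ) (hhigh : ∀ β ∈ Φ, θ - β ∈ AddSubmonoid.closure (↑Δ : Set E))
    (m : E → ℕ) (hm : θ = ∑ α ∈ Δ, (m α : ℝ) • α)
    (cw : E → E) (hcw : ∀ α ∈ Δ, ∀ β ∈ Δ, ⟪cw α, β⟫ = if α = β then 1 else 0)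
    (A : Set E) (hAΔ : A ⊆ (↑Δ : Set E))
    (hAI : IsConnectedSet (((↑Δ : Set E) \ A) ∪ {-θ}))
    (V : Set E) (hV : V = {β ∈ (↑Φ : Set E) | ∀ α ∈ A, ⟪cw α, β⟫ = (m α : ℝ)})
    (βA : E) (hβA : βA ∈ V)
    (hdom : ∀ β ∈ (↑Φ : Set E), β ∈ V ↔ β - βA ∈ AddSubmonoid.closure (↑Δ : Set E)) :
    AddSubgroup.closure V = AddSubgroup.closure (((↑Δ : Set E) \ A) ∪ {βA}) :=
  face_lattice_eq_general Φ hΦ Δ hΔΦ θ hθ m hm cw hcw A hAΔ hAI V hV βA hβA hdom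
end

section
/- In type C_ℓ realized as Φ = {±eᵢ ± eⱼ (i<j)} ∪ {±2eᵢ} in ℝ^ℓ, for every γ in the ℕ-span of the positive roots, the length |γ| equals the positive length |γ|₊. -/
/-- The positive roots of type `C_ℓ` in `ℤ^ℓ`: `eᵢ - eⱼ`, `eᵢ + eⱼ` (`i < j`)
and `2eᵢ`. -/
def posRootsC (ℓ : ℕ) : Set (Fin ℓ → ℤ) :=
  {v | (∃ i, v = (2 : ℤ) • Pi.single i 1) ∨
    ∃ i j, i < j ∧ (v = Pi.single i 1 + Pi.single j 1 ∨ v = Pi.single i 1 - Pi.single j 1)}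

/-- All roots of type `C_ℓ`: `±eᵢ ± eⱼ` (`i < j`) and `±2eᵢ`. -/
def rootsC (ℓ : ℕ) : Set (Fin ℓ → ℤ) := posRootsC ℓ ∪ (Neg.neg '' posRootsC ℓ)

/-!
Every root of type `C_ℓ` has ℓ¹-norm `2`, so a sum of `r` roots has ℓ¹-norm at most `2r`.
Conversely, an element `γ ≠ 0` of the ℕ-span has nonnegative prefix sums and even coordinate
sum, and this lets one split off a positive root `ρ` with `‖γ - ρ‖₁ = ‖γ‖₁ - 2` while keeping
both properties: `eᵢ - eⱼ` with `j` the first negative coordinate, or `2eᵢ` resp. `eᵢ + eⱼ` when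
`γ ≥ 0`. Peeling greedily writes `γ` as a sum of `‖γ‖₁ / 2` positive roots, so both lengths
equal `‖γ‖₁ / 2`.
-/

open Finset

lemma minLen_eq_card {V : Type*} [AddCommMonoid V] {S : Set V} {γ : V} {m : Multiset V}
    (hm : ∀ x ∈ m, x ∈ S) (hsum : m.sum = γ)
    (hmin : ∀ m' : Multiset V, (∀ x ∈ m', x ∈ S) → m'.sum = γ → m.card ≤ m'.card) :
    minLen S γ = m.card :=
  IsLeast.csInf_eq ⟨⟨m, hm, hsum, rfl⟩, by rintro _ ⟨m', hm', hsum', rfl⟩; exact hmin m' hm' hsum'⟩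

namespace RootSystemC

section AbsSum

variable {ι : Type*} [Fintype ι]

def absSum (γ : ι → ℤ) : ℤ := ∑ i, |γ i|

lemma absSum_nonneg (γ : ι → ℤ) : 0 ≤ absSum γ :=
  sum_nonneg fun _ _ => abs_nonneg _

lemma absSum_neg (γ : ι → ℤ) : absSum (-γ) = absSum γ := by
  simp [absSum]

lemma absSum_add_le (γ δ : ι → ℤ) : absSum (γ + δ) ≤ absSum γ + absSum δ := by
  rw [absSum, absSum, absSum, ← sum_add_distrib]
  exact sum_le_sum fun i _ => abs_add_le _ _

lemma absSum_of_nonneg {γ : ι → ℤ} (h : 0 ≤ γ) : absSum γ = ∑ i, γ i :=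
  sum_congr rfl fun i _ => abs_of_nonneg (h i)

variable [DecidableEq ι]

lemma absSum_single (i : ι) (c : ℤ) : absSum (Pi.single i c) = |c| := by
  rw [absSum, sum_eq_single i (fun t _ ht => by simp [ht]) (by simp), Pi.single_eq_same]

lemma absSum_sub_single (γ : ι → ℤ) (i : ι) (c : ℤ) :
    absSum (γ - Pi.single i c) = absSum γ - |γ i| + |γ i - c| := by
  have : absSum (γ - Pi.single i c) - absSum γ = |γ i - c| - |γ i| := by
    rw [absSum, absSum, ← sum_sub_distrib, sum_eq_single i (fun t _ ht => by simp [ht]) (by simp)]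
    simp
  linarith

lemma absSum_single_sub_single {i j : ι} (hij : i ≠ j) (c d : ℤ) :
    absSum (Pi.single i c - Pi.single j d) = |c| + |d| := by
  simp [absSum_sub_single, absSum_single, hij.symm]

lemma absSum_sub_single_sub_single {γ : ι → ℤ} {i j : ι} (hij : i ≠ j) (hi : 0 < γ i)
    (hj : γ j < 0) : absSum (γ - (Pi.single i 1 - Pi.single j 1)) = absSum γ - 2 := by
  rw [show γ - (Pi.single i 1 - Pi.single j 1) = γ - Pi.single i 1 - Pi.single j (-1) by
      rw [Pi.single_neg]; abel, absSum_sub_single, absSum_sub_single]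
  simp only [Pi.sub_apply, Pi.single_eq_of_ne hij.symm, sub_zero, abs_eq_max_neg]
  omega

end AbsSum

variable {ℓ : ℕ}

lemma absSum_of_mem_posRootsC {ρ : Fin ℓ → ℤ} (hρ : ρ ∈ posRootsC ℓ) : absSum ρ = 2 := by
  rcases hρ with ⟨i, rfl⟩ | ⟨i, j, hij, rfl | rfl⟩
  · rw [← Pi.single_smul, absSum_single]
    norm_num
  · rw [← sub_neg_eq_add, ← Pi.single_neg, absSum_single_sub_single hij.ne]
    norm_num
  · rw [absSum_single_sub_single hij.ne]
    norm_num

lemma absSum_of_mem_rootsC {ρ : Fin ℓ → ℤ} (hρ : ρ ∈ rootsC ℓ) : absSum ρ = 2 := by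
  rcases hρ with hρ | ⟨ρ, hρ, rfl⟩
  · exact absSum_of_mem_posRootsC hρ
  · rw [absSum_neg, absSum_of_mem_posRootsC hρ]

lemma absSum_sum_le {m : Multiset (Fin ℓ → ℤ)} (hm : ∀ x ∈ m, x ∈ rootsC ℓ) :
    absSum m.sum ≤ 2 * m.card :=
  calc absSum m.sum ≤ (m.map absSum).sum :=
        Multiset.le_sum_of_subadditive absSum (by simp [absSum]) absSum_add_le m
    _ = 2 * m.card := by
        rw [Multiset.map_congr rfl fun x hx => absSum_of_mem_rootsC (hm x hx),
          Multiset.map_const', Multiset.sum_replicate, nsmul_eq_mul, mul_comm]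

/-- This is in fact the ℕ-span of `posRootsC ℓ`. -/
def spanC (ℓ : ℕ) : AddSubmonoid (Fin ℓ → ℤ) where
  carrier := {γ | (∀ k, 0 ≤ ∑ i ∈ Iic k, γ i) ∧ Even (∑ i, γ i)}
  zero_mem' := by simp
  add_mem' := by
    rintro a b ⟨ha, ha'⟩ ⟨hb, hb'⟩
    simp only [Set.mem_ofPred_eq, Pi.add_apply, sum_add_distrib]
    exact ⟨fun k => add_nonneg (ha k) (hb k), ha'.add hb'⟩

lemma mem_spanC {γ : Fin ℓ → ℤ} :
    γ ∈ spanC ℓ ↔ (∀ k, 0 ≤ ∑ i ∈ Iic k, γ i) ∧ Even (∑ i, γ i) :=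
  Iff.rfl

lemma posRootsC_subset_spanC : posRootsC ℓ ⊆ spanC ℓ := by
  rintro ρ (⟨i, rfl⟩ | ⟨i, j, hij, rfl | rfl⟩) <;>
    simp only [SetLike.mem_coe, mem_spanC, Pi.smul_apply, Pi.add_apply, Pi.sub_apply,
      smul_eq_mul, ← mul_sum, sum_add_distrib, sum_sub_distrib, sum_pi_single', mem_Iic, mem_univ,
      if_true]
  · exact ⟨fun k => by split_ifs <;> norm_num, by norm_num⟩
  · exact ⟨fun k => by split_ifs <;> norm_num, by norm_num⟩
  · refine ⟨fun k => ?_, by norm_num⟩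
    split_ifs with hi hj hj
    all_goals first | exact absurd (hij.le.trans hj) hi | norm_num

lemma closure_posRootsC_le_spanC : AddSubmonoid.closure (posRootsC ℓ) ≤ spanC ℓ :=
  AddSubmonoid.closure_le.2 posRootsC_subset_spanC

lemma sub_mem_spanC {γ ρ : Fin ℓ → ℤ} (hγ : γ ∈ spanC ℓ) (hρ : ρ ∈ spanC ℓ)
    (h : ∀ k, 0 ≤ ∑ i ∈ Iic k, (γ - ρ) i) : γ - ρ ∈ spanC ℓ := by
  refine ⟨h, ?_⟩
  simp only [Pi.sub_apply, sum_sub_distrib]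
  exact hγ.2.sub hρ.2

def IsReducingRoot (γ ρ : Fin ℓ → ℤ) : Prop :=
  ρ ∈ posRootsC ℓ ∧ γ - ρ ∈ spanC ℓ ∧ absSum (γ - ρ) = absSum γ - 2

lemma exists_pos_before_first_neg {γ : Fin ℓ → ℤ} (hγ : γ ∈ spanC ℓ) {j₀ : Fin ℓ}
    (hj₀ : γ j₀ < 0) :
    ∃ i j, i < j ∧ 0 < γ i ∧ γ j < 0 ∧ ∀ t < j, 0 ≤ γ t := by
  obtain ⟨j, hj, hmin⟩ := wellFounded_lt.has_min {j | γ j < 0} ⟨j₀, hj₀⟩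
  have hprefix : 0 < ∑ t ∈ Iio j, γ t := by
    have := hγ.1 j
    rw [Iic_eq_cons_Iio, sum_cons] at this
    exact lt_of_lt_of_le (neg_pos.2 hj) (by linarith)
  obtain ⟨i, hi, hγi⟩ : ∃ i ∈ Iio j, 0 < γ i := by
    by_contra! h
    exact (sum_nonpos h).not_gt hprefix
  exact ⟨i, j, mem_Iio.1 hi, hγi, hj, fun t ht => not_lt.1 fun h => hmin t h ht⟩

lemma isReducingRoot_single_sub_single {γ : Fin ℓ → ℤ} (hγ : γ ∈ spanC ℓ) {i j : Fin ℓ}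
    (hij : i < j) (hi : 0 < γ i) (hj : γ j < 0) (hbefore : ∀ t < j, 0 ≤ γ t) :
    IsReducingRoot γ (Pi.single i 1 - Pi.single j 1) := by
  have hρ : Pi.single i 1 - Pi.single j 1 ∈ posRootsC ℓ := Or.inr ⟨i, j, hij, Or.inr rfl⟩
  refine ⟨hρ, sub_mem_spanC hγ (posRootsC_subset_spanC hρ) fun k => ?_,
    absSum_sub_single_sub_single hij.ne hi hj⟩
  have hk := hγ.1 k
  simp only [Pi.sub_apply, sum_sub_distrib, sum_pi_single', mem_Iic]
  split_ifs with hik hjk hjk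
  · omega
  · have : γ i ≤ ∑ t ∈ Iic k, γ t :=
      single_le_sum (fun t ht => hbefore t ((mem_Iic.1 ht).trans_lt (not_le.1 hjk)))
        (mem_Iic.2 hik)
    omega
  · exact absurd (hij.le.trans hjk) hik
  · omega

lemma exists_posRootsC_le_of_nonneg {γ : Fin ℓ → ℤ} (hγ : γ ∈ spanC ℓ) (h0 : 0 ≤ γ)
    (hne : γ ≠ 0) : ∃ ρ ∈ posRootsC ℓ, 0 ≤ ρ ∧ ρ ≤ γ := by
  obtain ⟨i, hi⟩ : ∃ i, 0 < γ i := by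
    by_contra! h
    exact hne (funext fun t => le_antisymm (h t) (h0 t))
  by_cases h2 : 2 ≤ γ i
  · refine ⟨2 • Pi.single i 1, Or.inl ⟨i, rfl⟩, fun t => ?_, fun t => ?_⟩ <;>
      have h0t : 0 ≤ γ t := h0 t <;>
      simp only [Pi.smul_apply, Pi.single_apply, Pi.zero_apply, smul_eq_mul] <;>
      split_ifs <;> subst_vars <;> omega
  obtain ⟨a, b, hab, ha, hb⟩ : ∃ a b, a < b ∧ 0 < γ a ∧ 0 < γ b := by
    obtain ⟨j, hji, hj⟩ : ∃ j ≠ i, 0 < γ j := by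
      by_contra! h
      have : ∑ t, γ t = γ i :=
        sum_eq_single i (fun t _ ht => le_antisymm (h t ht) (h0 t)) (by simp)
      obtain ⟨c, hc⟩ := hγ.2
      omega
    rcases lt_or_gt_of_ne hji with h | h
    exacts [⟨j, i, h, hj, hi⟩, ⟨i, j, h, hi, hj⟩]
  refine ⟨Pi.single a 1 + Pi.single b 1, Or.inr ⟨a, b, hab, Or.inl rfl⟩,
      fun t => ?_, fun t => ?_⟩ <;>
    have h0t : 0 ≤ γ t := h0 t <;>
    simp only [Pi.add_apply, Pi.single_apply, Pi.zero_apply] <;>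
    split_ifs <;> subst_vars <;> omega

lemma exists_isReducingRoot_of_nonneg {γ : Fin ℓ → ℤ} (hγ : γ ∈ spanC ℓ) (h0 : 0 ≤ γ)
    (hne : γ ≠ 0) : ∃ ρ, IsReducingRoot γ ρ := by
  obtain ⟨ρ, hρ, hρ0, hργ⟩ := exists_posRootsC_le_of_nonneg hγ h0 hne
  have hsub : 0 ≤ γ - ρ := sub_nonneg.2 hργ
  refine ⟨ρ, hρ, sub_mem_spanC hγ (posRootsC_subset_spanC hρ)
    fun _ => sum_nonneg fun t _ => hsub t, ?_⟩
  rw [absSum_of_nonneg hsub, absSum_of_nonneg h0, ← absSum_of_mem_posRootsC hρ,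
    absSum_of_nonneg hρ0, ← sum_sub_distrib]
  rfl

lemma exists_isReducingRoot {γ : Fin ℓ → ℤ} (hγ : γ ∈ spanC ℓ) (hne : γ ≠ 0) :
    ∃ ρ, IsReducingRoot γ ρ := by
  by_cases hneg : ∃ j, γ j < 0
  · obtain ⟨j₀, hj₀⟩ := hneg
    obtain ⟨i, j, hij, hi, hj, hbefore⟩ := exists_pos_before_first_neg hγ hj₀
    exact ⟨_, isReducingRoot_single_sub_single hγ hij hi hj hbefore⟩
  · exact exists_isReducingRoot_of_nonneg hγ (fun t => not_lt.1 fun h => hneg ⟨t, h⟩) hne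

theorem exists_multiset_posRootsC_card_eq (γ : Fin ℓ → ℤ) (hγ : γ ∈ spanC ℓ) :
    ∃ m : Multiset (Fin ℓ → ℤ), (∀ x ∈ m, x ∈ posRootsC ℓ) ∧ m.sum = γ ∧
      2 * (m.card : ℤ) = absSum γ := by
  by_cases hne : γ = 0
  · exact ⟨0, by simp, by simp [hne], by simp [hne, absSum]⟩
  obtain ⟨ρ, hρ, hsub, habs⟩ := exists_isReducingRoot hγ hne
  obtain ⟨m, hm, hsum, hcard⟩ := exists_multiset_posRootsC_card_eq (γ - ρ) hsub
  refine ⟨ρ ::ₘ m, ?_, by simp [hsum], by simp; omega⟩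
  simpa [or_imp, forall_and] using ⟨hρ, hm⟩
termination_by (absSum γ).toNat
decreasing_by have := absSum_nonneg (γ - ρ); omega

end RootSystemC

open RootSystemC

/-- In type `C_ℓ`, for every `γ` in the ℕ-span of the positive roots, the length
equals the positive length. -/
theorem length_eq_posLength_C (ℓ : ℕ) (γ : Fin ℓ → ℤ)
    (hγ : γ ∈ AddSubmonoid.closure (posRootsC ℓ)) :
    minLen (rootsC ℓ) γ = minLen (posRootsC ℓ) γ := by
  obtain ⟨m, hm, hsum, hcard⟩ :=
    exists_multiset_posRootsC_card_eq γ (closure_posRootsC_le_spanC hγ)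
  have hmin : ∀ m' : Multiset (Fin ℓ → ℤ), (∀ x ∈ m', x ∈ rootsC ℓ) → m'.sum = γ →
      m.card ≤ m'.card := by
    intro m' hm' hsum'
    have := absSum_sum_le hm'
    rw [hsum'] at this
    omega
  have hm_roots : ∀ x ∈ m, x ∈ rootsC ℓ := fun x hx => Or.inl (hm x hx)
  rw [minLen_eq_card hm_roots hsum hmin,
    minLen_eq_card hm hsum fun m' hm' => hmin m' fun x hx => Or.inl (hm' x hx)]
end
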